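/- arXiv:2310.15902 — 7 statements merged into one kernel-verified Lean document; each statement's English description precedes it below -/
import Mathlib

section
/- If a finite simplicial complex K collapses to a subcomplex L (via a sequence of elementary collapses), then the inclusion map L ↪ K is a homotopy equivalence. -/
/-! An elementary collapse removes a simplex `τ = σ ∪ {v}` together with its free face `σ`, so
`|K| = |L| ∪ |τ|` and `|L| ∩ |τ|` is the horn `⋃ j ∈ σ, |τ ∖ {j}|`. Sliding each point of `|τ|`
parallel to the line from the barycentre of `σ` to `v`, until its smallest `σ`-coordinate
vanishes, retracts `|τ|` onto the horn and fixes the horn pointwise. The straight-line homotopy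
to this retraction, glued with the identity on the closed set `|L|`, makes `|L|` a deformation
retract of `|K|`; homotopy equivalences of inclusions compose along the sequence of collapses. -/

/-- An elementary collapse from `K` to `L`: `L` is obtained from `K` by removing a pair
`{σ, τ}` where `σ` is a free face of `τ`, i.e. `τ` is the unique face of `K` properly
containing `σ`. -/
def ElemCollapse {m : ℕ} (K L : Geometry.SimplicialComplex ℝ (EuclideanSpace ℝ (Fin m))) :
    Prop :=
  ∃ σ τ : Finset (EuclideanSpace ℝ (Fin m)),
    σ ∈ K.faces ∧ τ ∈ K.faces ∧ σ ⊂ τ ∧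
    (∀ υ ∈ K.faces, σ ⊂ υ → υ = τ) ∧
    L.faces = K.faces \ {σ, τ}

/-- `K` collapses to `L` if there is a finite sequence of elementary collapses from `K` to `L`. -/
def CollapsesTo {m : ℕ} (K L : Geometry.SimplicialComplex ℝ (EuclideanSpace ℝ (Fin m))) :
    Prop :=
  Relation.ReflTransGen (fun A B => ElemCollapse A B) K L

open Geometry ContinuousMap

section Inclusion

variable {X : Type*} [TopologicalSpace X]

def IsHomotopyEquivInclusion (s t : Set X) : Prop :=
  ∃ e : s ≃ₕ t, ∀ x : s, (e x : X) = x

theorem IsHomotopyEquivInclusion.refl (s : Set X) : IsHomotopyEquivInclusion s s :=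
  ⟨ContinuousMap.HomotopyEquiv.refl s, fun _ => rfl⟩

theorem IsHomotopyEquivInclusion.trans {s t u : Set X} (hst : IsHomotopyEquivInclusion s t)
    (htu : IsHomotopyEquivInclusion t u) : IsHomotopyEquivInclusion s u := by
  obtain ⟨e₁, he₁⟩ := hst
  obtain ⟨e₂, he₂⟩ := htu
  exact ⟨e₁.trans e₂, fun x => (he₂ (e₁ x)).trans (he₁ x)⟩

theorem isHomotopyEquivInclusion_union_of_deformation {A T : Set X} (hA : IsClosed A)
    (hT : IsClosed T) (F : unitInterval × X → X) (hF : Continuous F)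
    (hF₀ : ∀ x ∈ T, F (0, x) = x) (hF₁ : ∀ x ∈ T, F (1, x) ∈ A)
    (hFT : ∀ t, ∀ x ∈ T, F (t, x) ∈ T) (hFA : ∀ t, ∀ x ∈ A ∩ T, F (t, x) = x) :
    IsHomotopyEquivInclusion A (A ∪ T) := by
  classical
  let G : unitInterval × X → X := fun p => if p.2 ∈ A then p.2 else F p
  have hG : ContinuousOn G (Prod.snd ⁻¹' (A ∪ T)) := by
    refine ContinuousOn.union_of_isClosed ?_ ?_ (hA.preimage continuous_snd)
      (hT.preimage continuous_snd)
    · exact continuous_snd.continuousOn.congr fun p hp => if_pos hp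
    · refine hF.continuousOn.congr fun p hp => ?_
      by_cases hpA : p.2 ∈ A
      · simp only [G, if_pos hpA, hFA p.1 p.2 ⟨hpA, hp⟩]
      · exact if_neg hpA
  have hGT : ∀ t, ∀ x ∈ A ∪ T, G (t, x) ∈ A ∪ T := fun t x hx => by
    by_cases hxA : x ∈ A
    · simp only [G, if_pos hxA]; exact Or.inl hxA
    · simp only [G, if_neg hxA]; exact Or.inr (hFT t x (hx.resolve_left hxA))
  have hG₁ : ∀ x ∈ A ∪ T, G (1, x) ∈ A := fun x hx => by
    by_cases hxA : x ∈ A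
    · simp only [G, if_pos hxA]; exact hxA
    · simp only [G, if_neg hxA]; exact hF₁ x (hx.resolve_left hxA)
  let r : C(↥(A ∪ T), A) :=
    ⟨fun x => ⟨G (1, x), hG₁ x x.2⟩,
      (hG.comp_continuous (by fun_prop) fun x => x.2).subtype_mk _⟩
  refine ⟨⟨ContinuousMap.inclusion Set.subset_union_left, r, ?_, ⟨?_⟩⟩, fun _ => rfl⟩
  · convert! ContinuousMap.Homotopic.refl (ContinuousMap.id A)
    ext x
    exact if_pos x.2
  · refine
      { toFun := fun p => ⟨G (unitInterval.symm p.1, p.2), hGT _ _ p.2.2⟩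
        continuous_toFun := (hG.comp_continuous (by fun_prop) fun p => p.2.2).subtype_mk _
        map_zero_left := fun x => by simp only [unitInterval.symm_zero]; rfl
        map_one_left := fun x => Subtype.ext ?_ }
    by_cases hxA : (x : X) ∈ A
    · simp [G, hxA]
    · simp [G, hxA, hF₀ x ((x.2).resolve_left hxA)]

end Inclusion

theorem isHomotopyEquivInclusion_union_of_retraction {V : Type*} [AddCommGroup V] [Module ℝ V]
    [TopologicalSpace V] [IsTopologicalAddGroup V] [ContinuousSMul ℝ V] {A T : Set V}
    (hA : IsClosed A) (hT : IsClosed T) (hTconv : Convex ℝ T) (r : V → V) (hr : Continuous r)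
    (hrT : Set.MapsTo r T (A ∩ T)) (hrA : ∀ x ∈ A ∩ T, r x = x) :
    IsHomotopyEquivInclusion A (A ∪ T) := by
  refine isHomotopyEquivInclusion_union_of_deformation hA hT
    (fun p => p.2 + (p.1 : ℝ) • (r p.2 - p.2)) (by fun_prop) (fun x _ => by simp)
    (fun x hx => by simpa using (hrT hx).1)
    (fun t x hx => hTconv.add_smul_sub_mem hx (hrT hx).2 t.2) (fun t x hx => by simp [hrA x hx])

section Barycentric

variable {E : Type*} [NormedAddCommGroup E] [NormedSpace ℝ E]

def IsBarycentricCoords (τ : Finset E) (c : E → E → ℝ) : Prop :=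
  ∀ w : E → ℝ, ∑ i ∈ τ, w i = 1 → ∀ j ∈ τ, c j (∑ i ∈ τ, w i • i) = w j

theorem AffineIndependent.exists_isBarycentricCoords [FiniteDimensional ℝ E] {τ : Finset E}
    (hτ : AffineIndependent ℝ ((↑) : τ → E)) :
    ∃ c, (∀ j, Continuous (c j)) ∧ IsBarycentricCoords τ c := by
  classical
  obtain ⟨t, hτt, ht, hspan⟩ := exists_subset_affineIndependent_affineSpan_eq_top hτ
  let b : AffineBasis t ℝ E := ⟨(↑), ht, by rwa [Subtype.range_coe]⟩
  refine ⟨fun j => if hj : j ∈ t then b.coord ⟨j, hj⟩ else 0, fun j => ?_, fun w hw j hj => ?_⟩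
  · dsimp only
    split_ifs
    exacts [(b.coord _).continuous_of_finiteDimensional, continuous_const]
  · have hτt' : ∀ i ∈ τ, i ∈ t := fun i hi => hτt hi
    have hw' : ∑ i ∈ τ.subtype (· ∈ t), w i = 1 := by
      rwa [Finset.sum_subtype_of_mem w hτt']
    have hcomb :
        (τ.subtype (· ∈ t)).affineCombination ℝ b (fun i => w i) = ∑ i ∈ τ, w i • i := by
      rw [Finset.affineCombination_eq_linear_combination _ _ _ hw',
        ← Finset.sum_subtype_of_mem (fun i => w i • i) hτt']
      rfl
    dsimp only
    rw [dif_pos (hτt' j hj), ← hcomb,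
      b.coord_apply_combination_of_mem (Finset.mem_subtype.2 hj) hw']

variable {τ : Finset E} {c : E → E → ℝ} {x : E}

theorem IsBarycentricCoords.mem_convexHull_iff (hc : IsBarycentricCoords τ c) :
    x ∈ convexHull ℝ (τ : Set E) ↔
      (∀ j ∈ τ, 0 ≤ c j x) ∧ ∑ j ∈ τ, c j x = 1 ∧ ∑ j ∈ τ, c j x • j = x := by
  refine ⟨fun hx => ?_, fun hx => Finset.mem_convexHull'.2 ⟨_, hx⟩⟩
  obtain ⟨w, hw₀, hw₁, rfl⟩ := Finset.mem_convexHull'.1 hx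
  have hcw : ∀ j ∈ τ, c j (∑ i ∈ τ, w i • i) = w j := hc w hw₁
  refine ⟨fun j hj => hcw j hj ▸ hw₀ j hj, ?_, ?_⟩
  · rwa [Finset.sum_congr rfl hcw]
  · exact Finset.sum_congr rfl fun j hj => by rw [hcw j hj]

theorem IsBarycentricCoords.eq_zero_of_mem_convexHull_erase [DecidableEq E]
    (hc : IsBarycentricCoords τ c) {j : E} (hj : j ∈ τ)
    (hx : x ∈ convexHull ℝ (τ.erase j : Set E)) : c j x = 0 := by
  obtain ⟨w, -, hw₁, rfl⟩ := Finset.mem_convexHull'.1 hx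
  have hw'j : Function.update w j 0 j = 0 := Function.update_self j 0 w
  have herase : ∀ i ∈ τ.erase j, Function.update w j 0 i = w i :=
    fun i hi => Function.update_of_ne (Finset.ne_of_mem_erase hi) 0 w
  have hw'₁ : ∑ i ∈ τ, Function.update w j 0 i = 1 := by
    rwa [← Finset.sum_erase τ hw'j, Finset.sum_congr rfl herase]
  have hx : ∑ i ∈ τ.erase j, w i • i = ∑ i ∈ τ, Function.update w j 0 i • i := by
    rw [← Finset.sum_erase τ (by rw [hw'j, zero_smul])]
    exact Finset.sum_congr rfl fun i hi => by rw [herase i hi]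
  rw [hx, hc _ hw'₁ j hj, hw'j]

theorem Finset.sum_smul_mem_convexHull_erase [DecidableEq E] {s : Finset E} {w : E → ℝ} {j : E}
    (hw₀ : ∀ i ∈ s, 0 ≤ w i) (hw₁ : ∑ i ∈ s, w i = 1) (hj : w j = 0) :
    ∑ i ∈ s, w i • i ∈ convexHull ℝ (s.erase j : Set E) := by
  rw [← Finset.sum_erase s (f := fun i => w i • i) (a := j) (by simp [hj])]
  exact Finset.mem_convexHull'.2 ⟨w, fun i hi => hw₀ i (Finset.mem_of_mem_erase hi),
    by rwa [Finset.sum_erase s hj], rfl⟩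

end Barycentric

section Horn

open Finset

variable {E : Type*} [NormedAddCommGroup E] [NormedSpace ℝ E]
  {σ : Finset E} {c : E → E → ℝ} {v x : E}

def hornRetraction (c : E → E → ℝ) (hσ : σ.Nonempty) (v x : E) : E :=
  x + (σ.inf' hσ fun j => c j x) • ((#σ : ℝ) • v - ∑ j ∈ σ, j)

theorem continuous_hornRetraction (hσ : σ.Nonempty) (hc : ∀ j ∈ σ, Continuous (c j)) :
    Continuous (hornRetraction c hσ v) :=
  continuous_id.add ((Continuous.finset_inf'_apply hσ hc).smul continuous_const)

theorem IsBarycentricCoords.exists_hornRetraction_mem_convexHull_erase [DecidableEq E]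
    (hc : IsBarycentricCoords (insert v σ) c) (hσ : σ.Nonempty) (hv : v ∉ σ)
    (hx : x ∈ convexHull ℝ ((insert v σ : Finset E) : Set E)) :
    ∃ j ∈ σ, hornRetraction c hσ v x ∈ convexHull ℝ ((insert v σ).erase j : Set E) := by
  obtain ⟨hc₀, hc₁, hcx⟩ := hc.mem_convexHull_iff.1 hx
  set μ := σ.inf' hσ fun j => c j x
  have hμ₀ : 0 ≤ μ := le_inf' _ _ fun j hj => hc₀ j (mem_insert_of_mem hj)
  obtain ⟨j₀, hj₀, hμj₀⟩ := exists_mem_eq_inf' hσ fun j => c j x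
  -- the new coordinates: `μ` is moved from each vertex of `σ` onto `v`
  let w : E → ℝ := fun j => c j x + μ * if j = v then (#σ : ℝ) else -1
  have hwσ : ∀ j ∈ σ, w j = c j x - μ := fun j hj => by
    simp only [w, if_neg (ne_of_mem_of_not_mem hj hv)]
    ring
  have hwv : w v = c v x + #σ * μ := by simp only [w, ↓reduceIte]; ring
  have hr : ∑ i ∈ insert v σ, w i • i = hornRetraction c hσ v x := by
    calc ∑ i ∈ insert v σ, w i • i = x + μ • ((#σ : ℝ) • v - ∑ j ∈ σ, j) := by
          rw [sum_insert hv, sum_congr rfl fun j hj => by rw [hwσ j hj], hwv]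
          conv_rhs => rw [← hcx, sum_insert hv]
          rw [sum_congr rfl fun j _ => sub_smul _ _ j, sum_sub_distrib, ← smul_sum]
          module
      _ = hornRetraction c hσ v x := rfl
  refine ⟨j₀, hj₀, hr ▸ sum_smul_mem_convexHull_erase ?_ ?_ ?_⟩
  · intro i hi
    rcases mem_insert.1 hi with rfl | hi
    · rw [hwv]
      exact add_nonneg (hc₀ _ (mem_insert_self _ _)) (by positivity)
    · rw [hwσ i hi]
      exact sub_nonneg.2 (inf'_le _ hi)
  · rw [sum_insert hv, sum_congr rfl hwσ, hwv, sum_sub_distrib, sum_const, nsmul_eq_mul,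
      ← hc₁, sum_insert hv]
    ring
  · rw [hwσ j₀ hj₀]
    exact sub_eq_zero.2 hμj₀.symm

theorem IsBarycentricCoords.hornRetraction_eq_self [DecidableEq E]
    (hc : IsBarycentricCoords (insert v σ) c) (hσ : σ.Nonempty) {j : E} (hj : j ∈ σ)
    (hx : x ∈ convexHull ℝ ((insert v σ).erase j : Set E)) : hornRetraction c hσ v x = x := by
  have hx' : x ∈ convexHull ℝ (insert v σ : Finset E) :=
    convexHull_mono (coe_subset.2 (erase_subset _ _)) hx
  have hμ₀ : 0 ≤ σ.inf' hσ fun j => c j x :=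
    le_inf' _ _ fun i hi => (hc.mem_convexHull_iff.1 hx').1 i (mem_insert_of_mem hi)
  have hμ : (σ.inf' hσ fun j => c j x) ≤ 0 :=
    (inf'_le _ hj).trans_eq (hc.eq_zero_of_mem_convexHull_erase (mem_insert_of_mem hj) hx)
  simp [hornRetraction, le_antisymm hμ hμ₀]

end Horn

namespace Geometry.SimplicialComplex

variable {E : Type*} [NormedAddCommGroup E] [NormedSpace ℝ E] {K L : SimplicialComplex ℝ E}
  {σ τ : Finset E}

theorem isClosed_space (hK : K.faces.Finite) : IsClosed K.space :=
  hK.isClosed_biUnion fun s _ => s.finite_toSet.isClosed_convexHull ℝ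

theorem space_mono (h : L.faces ⊆ K.faces) : L.space ⊆ K.space :=
  Set.biUnion_subset_biUnion_left h

theorem space_eq_union_convexHull_of_faces_eq_diff (hL : L.faces = K.faces \ {σ, τ})
    (hτ : τ ∈ K.faces) (hστ : σ ⊆ τ) : K.space = L.space ∪ convexHull ℝ (τ : Set E) := by
  refine subset_antisymm (fun x hx => ?_) <|
    Set.union_subset (space_mono (hL ▸ Set.sdiff_subset)) (convexHull_subset_space hτ)
  obtain ⟨s, hs, hxs⟩ := mem_space_iff.1 hx
  by_cases hsστ : s ∈ ({σ, τ} : Set (Finset E))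
  · rcases hsστ with rfl | rfl
    exacts [Or.inr (convexHull_mono hστ hxs), Or.inr hxs]
  · exact Or.inl (mem_space_iff.2 ⟨s, hL ▸ ⟨hs, hsστ⟩, hxs⟩)

theorem erase_mem_faces_of_faces_eq_diff [DecidableEq E] (hL : L.faces = K.faces \ {σ, τ})
    (hτ : τ ∈ K.faces) (hστ : σ ⊂ τ) {j : E} (hj : j ∈ σ) : τ.erase j ∈ L.faces := by
  obtain ⟨v, hvτ, hvσ⟩ := Finset.exists_of_ssubset hστ
  have hvj : v ≠ j := fun h => hvσ (h ▸ hj)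
  rw [hL]
  refine ⟨K.down_closed hτ (Finset.erase_subset _ _) ⟨v, Finset.mem_erase.2 ⟨hvj, hvτ⟩⟩, ?_⟩
  rintro (h | h)
  · exact Finset.notMem_erase j τ (by rw [h]; exact hj)
  · exact Finset.notMem_erase j τ (by rw [h]; exact hστ.subset hj)

theorem space_inter_convexHull_subset_of_faces_eq_diff [DecidableEq E]
    (hL : L.faces = K.faces \ {σ, τ}) (hτ : τ ∈ K.faces)
    (huniq : ∀ υ ∈ K.faces, σ ⊂ υ → υ = τ) :
    L.space ∩ convexHull ℝ (τ : Set E) ⊆ ⋃ j ∈ σ, convexHull ℝ (τ.erase j : Set E) := by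
  rintro x ⟨hxL, hxτ⟩
  obtain ⟨η, hηL, hxη⟩ := mem_space_iff.1 hxL
  rw [hL] at hηL
  obtain ⟨j, hjσ, hjη⟩ : ∃ j ∈ σ, j ∉ η := by
    by_contra! hση
    rcases (show σ ⊆ η from hση).eq_or_ssubset with rfl | hση
    · exact hηL.2 (Or.inl rfl)
    · exact hηL.2 (Or.inr (huniq η hηL.1 hση))
  refine Set.mem_iUnion₂.2
    ⟨j, hjσ, convexHull_mono ?_ (K.inter_subset_convexHull hηL.1 hτ ⟨hxη, hxτ⟩)⟩
  rintro y ⟨hyη, hyτ⟩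
  exact Finset.mem_erase.2 ⟨fun h => hjη (h ▸ hyη), hyτ⟩

end Geometry.SimplicialComplex

section Collapse

variable {m : ℕ} {K L : SimplicialComplex ℝ (EuclideanSpace ℝ (Fin m))}

theorem ElemCollapse.faces_subset (h : ElemCollapse K L) : L.faces ⊆ K.faces := by
  obtain ⟨σ, τ, -, -, -, -, hL⟩ := h
  exact hL ▸ Set.sdiff_subset

theorem ElemCollapse.isHomotopyEquivInclusion (h : ElemCollapse K L) (hK : K.faces.Finite) :
    IsHomotopyEquivInclusion L.space K.space := by
  classical
  obtain ⟨σ, τ, hσK, hτK, hστ, huniq, hL⟩ := h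
  obtain ⟨v, hvτ, hvσ⟩ := Finset.exists_of_ssubset hστ
  obtain rfl : τ = insert v σ := (huniq _
    (K.down_closed hτK (Finset.insert_subset hvτ hστ.subset) (Finset.insert_nonempty _ _))
    (Finset.ssubset_insert hvσ)).symm
  have hσ : σ.Nonempty := K.nonempty_of_mem_faces hσK
  obtain ⟨c, hc_cont, hc⟩ := (K.indep hτK).exists_isBarycentricCoords
  rw [SimplicialComplex.space_eq_union_convexHull_of_faces_eq_diff hL hτK hστ.subset]
  refine isHomotopyEquivInclusion_union_of_retraction
    (SimplicialComplex.isClosed_space (hK.subset (hL ▸ Set.sdiff_subset)))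
    ((Finset.finite_toSet _).isClosed_convexHull ℝ) (convex_convexHull ℝ _)
    (hornRetraction c hσ v)
    (continuous_hornRetraction hσ fun j _ => hc_cont j) (fun x hx => ?_) fun x hx => ?_
  · obtain ⟨j, hj, hrx⟩ := hc.exists_hornRetraction_mem_convexHull_erase hσ hvσ hx
    exact ⟨SimplicialComplex.convexHull_subset_space
      (SimplicialComplex.erase_mem_faces_of_faces_eq_diff hL hτK hστ hj) hrx,
      convexHull_mono (Finset.coe_subset.2 (Finset.erase_subset _ _)) hrx⟩
  · obtain ⟨j, hj, hxj⟩ := Set.mem_iUnion₂.1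
      (SimplicialComplex.space_inter_convexHull_subset_of_faces_eq_diff hL hτK huniq hx)
    exact hc.hornRetraction_eq_self hσ hj hxj

theorem CollapsesTo.isHomotopyEquivInclusion (h : CollapsesTo K L) (hK : K.faces.Finite) :
    IsHomotopyEquivInclusion L.space K.space := by
  induction h using Relation.ReflTransGen.head_induction_on with
  | refl => exact .refl _
  | head hKB _ ih =>
    exact (ih (hK.subset hKB.faces_subset)).trans (hKB.isHomotopyEquivInclusion hK)

end Collapse

/-- If a finite simplicial complex `K` collapses to a subcomplex `L`, then the inclusion
`L ↪ K` (of underlying spaces) is a homotopy equivalence. -/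
theorem collapse_inclusion_homotopyEquiv {m : ℕ}
    (K L : Geometry.SimplicialComplex ℝ (EuclideanSpace ℝ (Fin m)))
    (hfin : K.faces.Finite)
    (hcol : CollapsesTo K L)
    (hsub : L.space ⊆ K.space) :
    ∃ g : C(K.space, L.space),
      (ContinuousMap.Homotopic
        (((⟨Set.inclusion hsub, continuous_inclusion hsub⟩ : C(L.space, K.space))).comp g)
        (ContinuousMap.id K.space)) ∧
      (ContinuousMap.Homotopic
        (g.comp (⟨Set.inclusion hsub, continuous_inclusion hsub⟩ : C(L.space, K.space)))
        (ContinuousMap.id L.space)) := by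
  obtain ⟨e, he⟩ := hcol.isHomotopyEquivInclusion hfin
  have he_incl : e.toFun = ⟨Set.inclusion hsub, continuous_inclusion hsub⟩ :=
    ContinuousMap.ext fun x => Subtype.ext (he x)
  exact ⟨e.invFun, he_incl ▸ e.right_inv, he_incl ▸ e.left_inv⟩
end

section
/- Let V be a discrete vector field on a finite simplicial complex K and fix a vertex x of K. If every pair of V has the form (σ, σ ∪ {x}) with x ∉ σ, then V is a gradient vector field, i.e., the directed graph obtained from the Hasse diagram of K by reversing the edges in V is acyclic. -/
variable {V : Type*} [DecidableEq V]

/-- `σ` is a facet (codimension-1 face) of `τ`. -/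
def IsFacet (σ τ : Finset V) : Prop := σ ⊆ τ ∧ σ.card + 1 = τ.card

/-- A discrete vector field on a simplicial complex `K`: a set of pairs `(σ, τ)` with `σ` a
facet of `τ`, both in `K`, such that each simplex of `K` occurs in at most one pair. -/
def IsVectorField (K : Set (Finset V)) (Vf : Set (Finset V × Finset V)) : Prop :=
  (∀ p ∈ Vf, p.1 ∈ K ∧ p.2 ∈ K ∧ IsFacet p.1 p.2) ∧
  (∀ p ∈ Vf, ∀ q ∈ Vf,
    (p.1 = q.1 ∨ p.1 = q.2 ∨ p.2 = q.1 ∨ p.2 = q.2) → p = q)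

/-- The edge relation of the Hasse diagram of `K` with the edges of `Vf` reversed. -/
def ModifiedHasse (K : Set (Finset V)) (Vf : Set (Finset V × Finset V))
    (a b : Finset V) : Prop :=
  (a ∈ K ∧ b ∈ K ∧ IsFacet a b ∧ (a, b) ∉ Vf) ∨ (b, a) ∈ Vf

/-- `Vf` is a gradient vector field: the directed graph obtained from the Hasse diagram of `K`
by reversing the edges of `Vf` is acyclic. -/
def IsGradient (K : Set (Finset V)) (Vf : Set (Finset V × Finset V)) : Prop :=
  ∀ a : Finset V, ¬ Relation.TransGen (ModifiedHasse K Vf) a a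

/-!
Rank a simplex `a` first by the size of its `x`-free part `a \ {x}`; among the simplices with
the same `x`-free part `σ`, rank `σ ∪ {x}` above `σ` if `σ` is unpaired and below it if
`(σ, σ ∪ {x})` is a pair (`gradientWeight` encodes this with offsets `0 < 1 < 2 < 3`). Every edge
of the modified Hasse diagram strictly increases this rank: a Hasse edge either enlarges the
`x`-free part or goes from an unpaired `σ` to `σ ∪ {x}`, and a reversed edge goes from `σ ∪ {x}`
down to its partner `σ`.
-/

theorem Relation.not_transGen_self_of_lt {α β : Type*} [Preorder β] {r : α → α → Prop}
    (f : α → β) (hf : ∀ a b, r a b → f a < f b) (a : α) : ¬ Relation.TransGen r a a := by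
  intro h
  have hlt : Relation.TransGen (· < ·) (f a) (f a) := h.lift f hf
  rw [Relation.transGen_eq_self] at hlt
  exact lt_irrefl _ hlt

theorem IsFacet.eq_insert_or_card_erase_lt {a b : Finset V} (h : IsFacet a b) (x : V) :
    (x ∉ a ∧ b = insert x a) ∨ (a.erase x).card < (b.erase x).card := by
  obtain ⟨hsub, hcard⟩ := h
  by_cases hxa : x ∈ a
  · right
    have := Finset.card_erase_add_one hxa
    have := Finset.card_erase_add_one (hsub hxa)
    omega
  by_cases hxb : x ∈ b
  · left
    refine ⟨hxa, (Finset.eq_of_subset_of_card_le (Finset.insert_subset hxb hsub) ?_).symm⟩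
    rw [Finset.card_insert_of_notMem hxa]
    omega
  · right
    rw [Finset.erase_eq_of_notMem hxa, Finset.erase_eq_of_notMem hxb]
    omega

section Weight

variable (Vf : Set (Finset V × Finset V)) (x : V)

open Classical in
noncomputable def gradientWeight (a : Finset V) : ℕ :=
  3 * (a.erase x).card + if x ∈ a then 1 else if (a, insert x a) ∈ Vf then 2 else 0

theorem gradientWeight_bounds (a : Finset V) :
    3 * (a.erase x).card ≤ gradientWeight Vf x a ∧
      gradientWeight Vf x a ≤ 3 * (a.erase x).card + 2 := by
  unfold gradientWeight
  split_ifs <;> omega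

theorem gradientWeight_of_notMem {σ : Finset V} (hx : x ∉ σ) (hσ : (σ, insert x σ) ∉ Vf) :
    gradientWeight Vf x σ = 3 * σ.card := by
  simp [gradientWeight, hx, hσ]

theorem gradientWeight_of_mem {σ : Finset V} (hx : x ∉ σ) (hσ : (σ, insert x σ) ∈ Vf) :
    gradientWeight Vf x σ = 3 * σ.card + 2 := by
  simp [gradientWeight, hx, hσ]

theorem gradientWeight_insert {σ : Finset V} (hx : x ∉ σ) :
    gradientWeight Vf x (insert x σ) = 3 * σ.card + 1 := by
  simp [gradientWeight, Finset.erase_insert hx]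

theorem gradientWeight_lt_of_modifiedHasse (K : Set (Finset V))
    (hpairs : ∀ p ∈ Vf, x ∉ p.1 ∧ p.2 = insert x p.1) {a b : Finset V}
    (h : ModifiedHasse K Vf a b) : gradientWeight Vf x a < gradientWeight Vf x b := by
  rcases h with ⟨-, -, hfacet, hab⟩ | hba
  · rcases hfacet.eq_insert_or_card_erase_lt x with ⟨hxa, rfl⟩ | hlt
    · rw [gradientWeight_of_notMem Vf x hxa hab, gradientWeight_insert Vf x hxa]
      omega
    · have := (gradientWeight_bounds Vf x a).2
      have := (gradientWeight_bounds Vf x b).1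
      omega
  · obtain ⟨hxb, rfl⟩ : x ∉ b ∧ a = insert x b := hpairs _ hba
    rw [gradientWeight_insert Vf x hxb, gradientWeight_of_mem Vf x hxb hba]
    omega

end Weight

theorem vectorField_insert_vertex_isGradient_general
    (K : Set (Finset V))
    (Vf : Set (Finset V × Finset V))
    (x : V)
    (hpairs : ∀ p ∈ Vf, x ∉ p.1 ∧ p.2 = insert x p.1) :
    IsGradient K Vf :=
  Relation.not_transGen_self_of_lt (gradientWeight Vf x) fun _ _ =>
    gradientWeight_lt_of_modifiedHasse Vf x K hpairs

/-- If every pair of a discrete vector field `Vf` on a finite simplicial complex `K` has the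
form `(σ, σ ∪ {x})` for a fixed vertex `x` (with `x ∉ σ`), then `Vf` is a gradient. -/
theorem vectorField_insert_vertex_isGradient
    (K : Set (Finset V)) (hK : K.Finite)
    (hcomplex : ∀ σ ∈ K, ∀ τ : Finset V, τ ⊆ σ → τ.Nonempty → τ ∈ K)
    (Vf : Set (Finset V × Finset V)) (hVf : IsVectorField K Vf)
    (x : V) (hx : {x} ∈ K)
    (hpairs : ∀ p ∈ Vf, x ∉ p.1 ∧ p.2 = insert x p.1) :
    IsGradient K Vf :=
  vectorField_insert_vertex_isGradient_general K Vf x hpairs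
end

section
/- The (d+1)-dimensional simplices of the incremental Delaunay complex I(X) are in bijection with conflict pairs: a set σ ∪ {x_{i+1}} with σ a d-simplex of Del(X_i) is a (d+1)-simplex of I(X) if and only if x_{i+1} lies strictly inside the circumsphere of σ, and every (d+1)-simplex of I(X) arises this way. -/
/-!
Both directions rest on one observation: a `d`-simplex `σ` of points in general position in `ℝ^d`
has exactly one circumsphere, and no other point of `X` lies on it. Hence a sphere witnessing
`σ ∪ {x_j} ∈ I(X)` with `j` the largest index must be the circumsphere of `σ`; the condition
"`x_j` on or inside" becomes "strictly inside", and "all earlier points on or outside" is exactly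
Delaunay membership of `σ` in `Del(X_{j-1})`.
-/

open Finset

def GenPos {d n : ℕ} (x : Fin n → EuclideanSpace ℝ (Fin d)) : Prop :=
  ∀ s : Finset (Fin n), s.Nonempty → s.card ≤ d + 1 →
    (AffineIndependent ℝ (fun i : s => x i)) ∧
    ∀ (c : EuclideanSpace ℝ (Fin d)) (r : ℝ),
      ((∀ i ∈ s, dist (x i) c = r) ∧
        ∀ (c' : EuclideanSpace ℝ (Fin d)) (r' : ℝ),
          (∀ i ∈ s, dist (x i) c' = r') → r ≤ r') →
      ∀ j, j ∉ s → dist (x j) c ≠ r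

/-- `σ` belongs to the Delaunay triangulation of the points indexed by `Y`. -/
def DelMem {d n : ℕ} (x : Fin n → EuclideanSpace ℝ (Fin d)) (Y : Finset (Fin n))
    (σ : Finset (Fin n)) : Prop :=
  σ.Nonempty ∧ σ ⊆ Y ∧
    ∃ (c : EuclideanSpace ℝ (Fin d)) (r : ℝ),
      (∀ i ∈ σ, dist (x i) c = r) ∧ ∀ i ∈ Y, r ≤ dist (x i) c

/-- `σ` belongs to the incremental Delaunay complex `I(X)`. -/
def IncrMem {d n : ℕ} (x : Fin n → EuclideanSpace ℝ (Fin d))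
    (σ : Finset (Fin n)) : Prop :=
  ∃ h : σ.Nonempty, ∃ (c : EuclideanSpace ℝ (Fin d)) (r : ℝ),
    (∀ i ∈ σ.erase (σ.max' h), dist (x i) c = r) ∧
    dist (x (σ.max' h)) c ≤ r ∧
    ∀ i : Fin n, i < σ.max' h → r ≤ dist (x i) c

theorem AffineIndependent.eq_of_forall_dist_eq {V P ι : Type*} [NormedAddCommGroup V]
    [InnerProductSpace ℝ V] [MetricSpace P] [NormedAddTorsor V P] [FiniteDimensional ℝ V]
    [Fintype ι] {p : ι → P} (hp : AffineIndependent ℝ p)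
    (hcard : Fintype.card ι = Module.finrank ℝ V + 1) {c c' : P} {r r' : ℝ}
    (h : ∀ i, dist (p i) c = r) (h' : ∀ i, dist (p i) c' = r') :
    c = c' ∧ r = r' := by
  have : Nonempty ι := Fintype.card_pos_iff.mp (by omega)
  have hspan : affineSpan ℝ (Set.range p) = ⊤ :=
    hp.affineSpan_eq_top_iff_card_eq_finrank_add_one.mpr hcard
  have hsphere : ∀ (c : P) (r : ℝ), (∀ i, dist (p i) c = r) →
      (⟨c, r⟩ : EuclideanGeometry.Sphere P) = hp.existsUnique_dist_eq.choose := by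
    intro c r h
    refine hp.existsUnique_dist_eq.choose_spec.2 _ ⟨by simp [hspan], ?_⟩
    rintro _ ⟨i, rfl⟩
    exact h i
  have hcc' := (hsphere c r h).trans (hsphere c' r' h').symm
  exact ⟨congrArg EuclideanGeometry.Sphere.center hcc',
    congrArg EuclideanGeometry.Sphere.radius hcc'⟩

namespace GenPos

variable {d n : ℕ} {x : Fin n → EuclideanSpace ℝ (Fin d)} {σ : Finset (Fin n)}

theorem eq_of_forall_dist_eq (hgp : GenPos x) (hcard : σ.card = d + 1)
    {c c' : EuclideanSpace ℝ (Fin d)} {r r' : ℝ}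
    (h : ∀ i ∈ σ, dist (x i) c = r) (h' : ∀ i ∈ σ, dist (x i) c' = r') :
    c = c' ∧ r = r' :=
  (hgp σ (card_pos.mp (by omega)) hcard.le).1.eq_of_forall_dist_eq (by simp [hcard])
    (fun i => h i i.2) (fun i => h' i i.2)

theorem dist_ne_of_forall_dist_eq (hgp : GenPos x) (hcard : σ.card = d + 1)
    {c : EuclideanSpace ℝ (Fin d)} {r : ℝ} (h : ∀ i ∈ σ, dist (x i) c = r)
    {j : Fin n} (hj : j ∉ σ) : dist (x j) c ≠ r :=
  (hgp σ (card_pos.mp (by omega)) hcard.le).2 c r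
    ⟨h, fun _ _ h' => (hgp.eq_of_forall_dist_eq hcard h h').2.le⟩ j hj

end GenPos

theorem Finset.max'_insert_of_forall_lt {α : Type*} [LinearOrder α] {s : Finset α} {a : α}
    (ha : ∀ b ∈ s, b < a) (h : (insert a s).Nonempty) : (insert a s).max' h = a :=
  (max'_eq_iff _ _ _).mpr ⟨mem_insert_self a s, by
    simpa using fun b hb => (ha b hb).le⟩

theorem Finset.subset_filter_lt_iff {α : Type*} [Fintype α] [LinearOrder α] {s : Finset α}
    {a : α} : s ⊆ univ.filter (· < a) ↔ ∀ b ∈ s, b < a := by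
  simp [subset_iff]

section

variable {d n : ℕ} {x : Fin n → EuclideanSpace ℝ (Fin d)}

theorem incrMem_insert_iff {σ : Finset (Fin n)} {j : Fin n} (hlt : ∀ i ∈ σ, i < j) :
    IncrMem x (insert j σ) ↔ ∃ (c : EuclideanSpace ℝ (Fin d)) (r : ℝ),
      (∀ i ∈ σ, dist (x i) c = r) ∧ dist (x j) c ≤ r ∧ ∀ i < j, r ≤ dist (x i) c := by
  have hj : j ∉ σ := fun hj => (hlt j hj).false
  simp only [IncrMem, max'_insert_of_forall_lt hlt, erase_insert hj]
  exact ⟨fun ⟨_, h⟩ => h, fun h => ⟨insert_nonempty j σ, h⟩⟩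

theorem incrMem_insert_iff_dist_lt (hgp : GenPos x) {σ : Finset (Fin n)} {j : Fin n}
    (hcard : σ.card = d + 1) (hdel : DelMem x (univ.filter (· < j)) σ)
    {c : EuclideanSpace ℝ (Fin d)} {r : ℝ} (hσ : ∀ i ∈ σ, dist (x i) c = r) :
    IncrMem x (insert j σ) ↔ dist (x j) c < r := by
  obtain ⟨-, hsub, c₀, r₀, hσ₀, hdelaunay⟩ := hdel
  have hlt := subset_filter_lt_iff.mp hsub
  have hj : j ∉ σ := fun hj => (hlt j hj).false
  obtain ⟨rfl, rfl⟩ := hgp.eq_of_forall_dist_eq hcard hσ₀ hσ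
  rw [incrMem_insert_iff hlt]
  constructor
  · rintro ⟨c', r', hσ', hjin, -⟩
    obtain ⟨rfl, rfl⟩ := hgp.eq_of_forall_dist_eq hcard hσ hσ'
    exact hjin.lt_of_ne (hgp.dist_ne_of_forall_dist_eq hcard hσ hj)
  · exact fun hjin => ⟨c₀, r₀, hσ, hjin.le, fun i hi => hdelaunay i (by simpa using hi)⟩

theorem IncrMem.exists_conflict_pair (hgp : GenPos x) {τ : Finset (Fin n)}
    (hτ : IncrMem x τ) (hcard : τ.card = d + 2) :
    ∃ (j : Fin n) (σ : Finset (Fin n)),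
      τ = insert j σ ∧ j ∉ σ ∧ σ.card = d + 1 ∧
      DelMem x (univ.filter fun i => i < j) σ ∧
      ∃ (c : EuclideanSpace ℝ (Fin d)) (r : ℝ),
        (∀ i ∈ σ, dist (x i) c = r) ∧ dist (x j) c < r := by
  set j := τ.max' hτ.1
  have hjτ : j ∈ τ := max'_mem τ hτ.1
  have hlt : ∀ i ∈ τ.erase j, i < j := fun i hi =>
    (le_max' τ i (mem_of_mem_erase hi)).lt_of_ne (ne_of_mem_erase hi)
  have hσcard : (τ.erase j).card = d + 1 := by rw [card_erase_of_mem hjτ, hcard]; rfl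
  rw [← insert_erase hjτ, incrMem_insert_iff hlt] at hτ
  obtain ⟨c, r, hσ, hjin, hearlier⟩ := hτ
  refine ⟨j, τ.erase j, (insert_erase hjτ).symm, notMem_erase j τ, hσcard,
    ⟨card_pos.mp (by omega), subset_filter_lt_iff.mpr hlt, c, r, hσ,
      fun i hi => hearlier i (by simpa using hi)⟩, c, r, hσ, ?_⟩
  exact hjin.lt_of_ne (hgp.dist_ne_of_forall_dist_eq hσcard hσ (notMem_erase j τ))

end

theorem incr_top_simplices_iff_conflict_pairs_general {d n : ℕ}
    (x : Fin n → EuclideanSpace ℝ (Fin d))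
    (hgp : GenPos x) :
    (∀ (j : Fin n) (σ : Finset (Fin n)) (c : EuclideanSpace ℝ (Fin d)) (r : ℝ),
        σ.card = d + 1 →
        DelMem x (Finset.univ.filter fun i => i < j) σ →
        (∀ i ∈ σ, dist (x i) c = r) →
        (IncrMem x (insert j σ) ↔ dist (x j) c < r)) ∧
    (∀ τ : Finset (Fin n), IncrMem x τ → τ.card = d + 2 →
        ∃ (j : Fin n) (σ : Finset (Fin n)),
          τ = insert j σ ∧ j ∉ σ ∧ σ.card = d + 1 ∧
          DelMem x (Finset.univ.filter fun i => i < j) σ ∧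
          ∃ (c : EuclideanSpace ℝ (Fin d)) (r : ℝ),
            (∀ i ∈ σ, dist (x i) c = r) ∧ dist (x j) c < r) :=
  ⟨fun _ _ _ _ hcard hdel hσ => incrMem_insert_iff_dist_lt hgp hcard hdel hσ,
    fun _ hτ hcard => hτ.exists_conflict_pair hgp hcard⟩

/-- The `(d+1)`-simplices of `I(X)` are exactly the joins `σ ∪ {x_j}` of conflict pairs:
pairs of a `d`-simplex `σ` of the Delaunay triangulation of the points preceding `x_j`
whose circumsphere strictly contains `x_j`. -/
theorem incr_top_simplices_iff_conflict_pairs {d n : ℕ}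
    (x : Fin n → EuclideanSpace ℝ (Fin d))
    (hinj : Function.Injective x) (hgp : GenPos x) :
    (∀ (j : Fin n) (σ : Finset (Fin n)) (c : EuclideanSpace ℝ (Fin d)) (r : ℝ),
        σ.card = d + 1 →
        DelMem x (Finset.univ.filter fun i => i < j) σ →
        (∀ i ∈ σ, dist (x i) c = r) →
        (IncrMem x (insert j σ) ↔ dist (x j) c < r)) ∧
    (∀ τ : Finset (Fin n), IncrMem x τ → τ.card = d + 2 →
        ∃ (j : Fin n) (σ : Finset (Fin n)),
          τ = insert j σ ∧ j ∉ σ ∧ σ.card = d + 1 ∧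
          DelMem x (Finset.univ.filter fun i => i < j) σ ∧
          ∃ (c : EuclideanSpace ℝ (Fin d)) (r : ℝ),
            (∀ i ∈ σ, dist (x i) c = r) ∧ dist (x j) c < r) :=
  incr_top_simplices_iff_conflict_pairs_general x hgp
end

section
/- The incremental Delaunay complex I(X) of an ordered set of n points in general position in ℝ^d has O(n^{⌈(d+1)/2⌉}) simplices (for fixed d). -/
open Finset

/-!
A generalised sphere `(a, b) ∈ ℝ^d × ℝ` is a point of `ℝ^{d+1}`, and the power of each input point
with respect to it is an affine function of `(a, b)`. The spheres witnessing `σ ∈ I(X)` with last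
vertex `m` therefore form a polyhedron, pointed as soon as `m` has `d + 1` predecessors, and
pivoting inside it yields a witness `f` through exactly `d + 1` points `T`, with `σ ⊆ T ∪ {m}`.
Fix a generic linear functional `Λ` and expand it in the basis dual to `T`. At least `⌈d/2⌉` of
the coefficients at the non-maximal points of `T` share a sign; dropping those points leaves a set
`G` of `⌈(d+1)/2⌉` points such that `f` is the unique maximiser of `±Λ` over the spheres through
`G` with no earlier point strictly inside. So `(G, ±, [m ∈ T])` determines `T ∪ {m}`, and `σ` is
one of its `2^{d+2}` subsets; the simplices on the first `d + 1` points add at most `2^{d+1}`.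
-/

open Module
open scoped RealInnerProductSpace

namespace IncrementalDelaunay

section SpherePower

variable {E : Type*} [NormedAddCommGroup E] [InnerProductSpace ℝ E]

/-- A pair `(a, b) : E × ℝ` encodes the generalised sphere `{p | ‖p‖² - 2⟪p, a⟫ + b = 0}` with
centre `a` and squared radius `‖a‖² - b`; `spherePower p` is the power of `p` with respect to it. -/
noncomputable def spherePower (p : E) : E × ℝ →ᵃ[ℝ] ℝ where
  toFun f := ‖p‖ ^ 2 - 2 * ⟪p, f.1⟫ + f.2
  linear := LinearMap.snd ℝ E ℝ - (2 : ℝ) • (innerₛₗ ℝ p).comp (LinearMap.fst ℝ E ℝ)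
  map_vadd' f g := by simp [inner_add_right]; ring

lemma spherePower_apply (p : E) (f : E × ℝ) :
    spherePower p f = ‖p‖ ^ 2 - 2 * ⟪p, f.1⟫ + f.2 := rfl

lemma spherePower_linear_apply (p : E) (g : E × ℝ) :
    (spherePower p).linear g = g.2 - 2 * ⟪p, g.1⟫ := by
  simp [spherePower]

lemma spherePower_eq_dist_sq (p : E) (f : E × ℝ) :
    spherePower p f = dist p f.1 ^ 2 - (‖f.1‖ ^ 2 - f.2) := by
  rw [spherePower_apply, dist_eq_norm, norm_sub_sq_real]
  ring

lemma spherePower_sphere (p c : E) (r : ℝ) :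
    spherePower p (c, ‖c‖ ^ 2 - r ^ 2) = dist p c ^ 2 - r ^ 2 := by
  rw [spherePower_eq_dist_sq]
  ring

lemma dist_eq_sqrt_of_spherePower_eq_zero {p : E} {f : E × ℝ} (hf : spherePower p f = 0) :
    dist p f.1 = √(‖f.1‖ ^ 2 - f.2) := by
  rw [spherePower_eq_dist_sq, sub_eq_zero] at hf
  rw [← hf, Real.sqrt_sq dist_nonneg]

lemma eq_zero_of_spherePower_linear_eq_zero {S : Set E} (hS : affineSpan ℝ S = ⊤) {g : E × ℝ}
    (hg : ∀ p ∈ S, (spherePower p).linear g = 0) : g = 0 := by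
  have horth : vectorSpan ℝ S ≤ LinearMap.ker (innerₛₗ ℝ g.1) := by
    rw [vectorSpan_def, Submodule.span_le]
    rintro _ ⟨p, hp, q, hq, rfl⟩
    have hp' := hg p hp
    have hq' := hg q hq
    rw [spherePower_linear_apply] at hp' hq'
    simp only [SetLike.mem_coe, LinearMap.mem_ker, innerₛₗ_apply_apply, vsub_eq_sub,
      inner_sub_right, real_inner_comm p g.1, real_inner_comm q g.1]
    linarith
  have h1 : g.1 = 0 := by
    rw [AffineSubspace.vectorSpan_eq_top_of_affineSpan_eq_top ℝ E E hS] at horth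
    simpa using horth (Submodule.mem_top (x := g.1))
  obtain ⟨p, hp⟩ := AffineSubspace.nonempty_of_affineSpan_eq_top ℝ E E hS
  have h2 := hg p hp
  rw [spherePower_linear_apply, h1, inner_zero_right, mul_zero, sub_zero] at h2
  exact Prod.ext h1 h2

lemma eq_of_spherePower_eq_zero {S : Set E} (hS : affineSpan ℝ S = ⊤) {f g : E × ℝ}
    (hf : ∀ p ∈ S, spherePower p f = 0) (hg : ∀ p ∈ S, spherePower p g = 0) : f = g := by
  rw [← vsub_eq_zero_iff_eq]
  refine eq_zero_of_spherePower_linear_eq_zero hS fun p hp => ?_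
  rw [AffineMap.linearMap_vsub, hf p hp, hg p hp, vsub_self]

end SpherePower

section Pivoting

variable {ι V : Type*}

lemma exists_ray_nonneg_hits_zero (J : Finset ι) (a b : ι → ℝ) (ha : ∀ j ∈ J, 0 ≤ a j)
    (hb : ∃ j ∈ J, b j < 0) :
    ∃ t : ℝ, (∀ j ∈ J, 0 ≤ a j + t * b j) ∧ ∃ j ∈ J, b j ≠ 0 ∧ a j + t * b j = 0 := by
  obtain ⟨k, hk, hkmin⟩ := (J.filter (b · < 0)).exists_min_image (fun j => -a j / b j)
    (by simpa [Finset.Nonempty] using hb)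
  rw [mem_filter] at hk
  refine ⟨-a k / b k, fun j hj => ?_, k, hk.1, hk.2.ne, by rw [div_mul_cancel₀ _ hk.2.ne]; ring⟩
  rcases le_or_gt 0 (b j) with hbj | hbj
  · have : 0 ≤ -a k / b k := div_nonneg_of_nonpos (neg_nonpos.2 (ha k hk.1)) hk.2.le
    nlinarith [ha j hj]
  · have := mul_le_mul_of_nonpos_right (hkmin j (mem_filter.2 ⟨hj, hbj⟩)) hbj.le
    rw [div_mul_cancel₀ _ hbj.ne] at this
    linarith

variable [AddCommGroup V] [Module ℝ V]

noncomputable def tightSet (J : Finset ι) (φ : ι → V →ᵃ[ℝ] ℝ) (f : V) : Finset ι :=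
  J.filter (φ · f = 0)

variable [FiniteDimensional ℝ V] {J : Finset ι} {φ : ι → V →ᵃ[ℝ] ℝ}

lemma exists_tightSet_ssubset (hpointed : ∀ g, (∀ j ∈ J, (φ j).linear g = 0) → g = 0) {f : V}
    (hf : ∀ j ∈ J, 0 ≤ φ j f) (hcard : (tightSet J φ f).card < finrank ℝ V) :
    ∃ f', (∀ j ∈ J, 0 ≤ φ j f') ∧ tightSet J φ f ⊂ tightSet J φ f' := by
  -- move along a direction keeping the tight constraints tight until a new one becomes tight
  obtain ⟨g, hg, hg0⟩ := Submodule.exists_mem_ne_zero_of_ne_bot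
    (LinearMap.ker_ne_bot_of_finrank_lt
      (f := LinearMap.pi fun j : tightSet J φ f => (φ j).linear) (by simpa using hcard))
  have htight : ∀ j ∈ tightSet J φ f, (φ j).linear g = 0 :=
    fun j hj => congrFun (LinearMap.mem_ker.1 hg) ⟨j, hj⟩
  obtain ⟨j₀, hj₀, hgj₀⟩ : ∃ j ∈ J, (φ j).linear g ≠ 0 := by
    by_contra! h
    exact hg0 (hpointed g h)
  obtain ⟨g, htight, hdec⟩ : ∃ g, (∀ j ∈ tightSet J φ f, (φ j).linear g = 0) ∧
      ∃ j ∈ J, (φ j).linear g < 0 := by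
    rcases hgj₀.lt_or_gt with h | h
    · exact ⟨g, htight, j₀, hj₀, h⟩
    · exact ⟨-g, by simpa using htight, j₀, hj₀, by simpa using h⟩
  obtain ⟨t, hnonneg, k, hkJ, hk0, hkt⟩ :=
    exists_ray_nonneg_hits_zero J (φ · f) (fun j => (φ j).linear g) hf hdec
  have hmove (j : ι) : φ j (t • g +ᵥ f) = φ j f + t * (φ j).linear g := by
    rw [AffineMap.map_vadd, map_smul, smul_eq_mul, vadd_eq_add, add_comm]
  refine ⟨t • g +ᵥ f, fun j hj => hmove j ▸ hnonneg j hj, ?_⟩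
  rw [ssubset_iff_of_subset]
  · exact ⟨k, mem_filter.2 ⟨hkJ, hmove k ▸ hkt⟩, fun hk => hk0 (htight k hk)⟩
  · intro j hj
    obtain ⟨hjJ, hj0⟩ := mem_filter.1 hj
    exact mem_filter.2 ⟨hjJ, by rw [hmove, hj0, htight j hj, mul_zero, add_zero]⟩

theorem exists_tightSet_card_eq_finrank (hpointed : ∀ g, (∀ j ∈ J, (φ j).linear g = 0) → g = 0)
    (hbound : ∀ f, (tightSet J φ f).card ≤ finrank ℝ V) {f₀ : V} (hf₀ : ∀ j ∈ J, 0 ≤ φ j f₀) :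
    ∃ f, (∀ j ∈ J, 0 ≤ φ j f) ∧ tightSet J φ f₀ ⊆ tightSet J φ f ∧
      (tightSet J φ f).card = finrank ℝ V := by
  induction hk : finrank ℝ V - (tightSet J φ f₀).card using Nat.strong_induction_on
    generalizing f₀ with
  | _ k ih =>
  rcases (hbound f₀).lt_or_eq with hlt | heq
  · obtain ⟨f₁, hf₁, hss⟩ := exists_tightSet_ssubset hpointed hf₀ hlt
    have := card_lt_card hss
    obtain ⟨f, hf, hsub, hcard⟩ := ih _ (by omega) hf₁ rfl
    exact ⟨f, hf, hss.subset.trans hsub, hcard⟩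
  · exact ⟨f₀, hf₀, subset_rfl, heq⟩

end Pivoting

section Generic

variable {ι E : Type*} [NormedAddCommGroup E] [InnerProductSpace ℝ E]

def IsGeneric (x : ι → E) (Λ : Dual ℝ (E × ℝ)) : Prop :=
  ∀ S : Finset ι, S.card ≤ finrank ℝ E →
    ∀ a : ι → ℝ, Λ ≠ ∑ j ∈ S, a j • (spherePower (x j)).linear

/-- The combinations excluded by `IsGeneric` fill finitely many proper subspaces of the dual. -/
lemma exists_isGeneric [FiniteDimensional ℝ E] [Finite ι] (x : ι → E) : ∃ Λ, IsGeneric x Λ := by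
  classical
  have := Fintype.ofFinite ι
  let W (S : Finset ι) : Submodule ℝ (Dual ℝ (E × ℝ)) :=
    Submodule.span ℝ (S.image fun j => (spherePower (x j)).linear)
  let 𝒲 := (univ.filter fun S : Finset ι => S.card ≤ finrank ℝ E).image W
  have hproper : ⊤ ∉ 𝒲 := by
    simp only [𝒲, mem_image, mem_filter, mem_univ, true_and, not_exists, not_and]
    intro S hS hW
    have hspan : finrank ℝ (W S) ≤ _ := finrank_span_finset_le_card _
    rw [hW, finrank_top, Subspace.dual_finrank_eq, finrank_prod, finrank_self] at hspan
    have := card_image_le (s := S) (f := fun j => (spherePower (x j)).linear)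
    omega
  obtain ⟨Λ, hΛ⟩ := Set.ne_univ_iff_exists_notMem _ |>.1
    (Subspace.biUnion_ne_univ_of_top_notMem hproper)
  refine ⟨Λ, fun S hS a heq => hΛ (Set.mem_biUnion (x := W S) ?_ ?_)⟩
  · exact mem_image_of_mem W (mem_filter.2 ⟨mem_univ S, hS⟩)
  · rw [heq]
    exact Submodule.sum_mem _ fun j hj =>
      Submodule.smul_mem _ _ (Submodule.subset_span (mem_image_of_mem _ hj))

lemma exists_eq_sum_smul_linear {x : ι → E} {T : Finset ι} (hT : affineSpan ℝ (x '' T) = ⊤)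
    (Λ : Dual ℝ (E × ℝ)) : ∃ a : ι → ℝ, Λ = ∑ j ∈ T, a j • (spherePower (x j)).linear := by
  classical
  let Φ : E × ℝ →ₗ[ℝ] (T → ℝ) := LinearMap.pi fun j : T => (spherePower (x j)).linear
  have hΦ : Function.Injective Φ := by
    rw [← LinearMap.ker_eq_bot, LinearMap.ker_eq_bot']
    intro g hg
    refine eq_zero_of_spherePower_linear_eq_zero hT ?_
    rintro _ ⟨j, hj, rfl⟩
    exact congrFun hg ⟨j, hj⟩
  obtain ⟨ψ, rfl⟩ := LinearMap.dualMap_surjective_of_injective hΦ Λ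
  refine ⟨fun j => if hj : j ∈ T then ψ (Pi.single ⟨j, hj⟩ 1) else 0, ?_⟩
  refine LinearMap.ext fun g => ?_
  rw [LinearMap.dualMap_apply, LinearMap.pi_apply_eq_sum_univ, LinearMap.sum_apply,
    ← sum_coe_sort T]
  refine sum_congr rfl fun j _ => ?_
  have hsingle : (fun k => if j = k then (1 : ℝ) else 0) = Pi.single j 1 := by
    ext k
    simp [Pi.single_apply, eq_comm]
  simp [Φ, hsingle, mul_comm]

lemma IsGeneric.coeff_ne_zero [DecidableEq ι] {x : ι → E} {Λ : Dual ℝ (E × ℝ)}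
    (hΛ : IsGeneric x Λ) {T : Finset ι} (hT : T.card = finrank ℝ E + 1) {a : ι → ℝ}
    (ha : Λ = ∑ j ∈ T, a j • (spherePower (x j)).linear) {j : ι} (hj : j ∈ T) : a j ≠ 0 := by
  intro h0
  refine hΛ (T.erase j) (by rw [card_erase_of_mem hj, hT, Nat.add_sub_cancel]) a ?_
  rw [ha, ← sum_erase_add _ _ hj, h0, zero_smul, add_zero]

lemma sub_eq_sum_mul_spherePower {x : ι → E} {T : Finset ι} {a : ι → ℝ} {Λ : Dual ℝ (E × ℝ)}
    (ha : Λ = ∑ j ∈ T, a j • (spherePower (x j)).linear) {f : E × ℝ}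
    (hf : ∀ j ∈ T, spherePower (x j) f = 0) (g : E × ℝ) :
    Λ g - Λ f = ∑ j ∈ T, a j * spherePower (x j) g := by
  rw [← map_sub, ha, LinearMap.sum_apply]
  refine sum_congr rfl fun j hj => ?_
  rw [LinearMap.smul_apply, smul_eq_mul, ← vsub_eq_sub, AffineMap.linearMap_vsub, hf j hj,
    vsub_eq_sub, sub_zero]

end Generic

def IsUniqueMaxOn {V : Type*} (Λ : V → ℝ) (s : Set V) (f : V) : Prop :=
  f ∈ s ∧ ∀ g ∈ s, g ≠ f → Λ g < Λ f

lemma IsUniqueMaxOn.eq {V : Type*} {Λ : V → ℝ} {s : Set V} {f f' : V} (h : IsUniqueMaxOn Λ s f)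
    (h' : IsUniqueMaxOn Λ s f') : f = f' := by
  by_contra hne
  exact lt_asymm (h.2 f' h'.1 (Ne.symm hne)) (h'.2 f h.1 hne)

lemma exists_sign_subset_card_eq_half {ι : Type*} (s : Finset ι) (a : ι → ℝ)
    (ha : ∀ j ∈ s, a j ≠ 0) :
    ∃ ε ∈ ({1, -1} : Finset ℝ), ∃ N ⊆ s, N.card = (s.card + 1) / 2 ∧ ∀ j ∈ N, ε * a j < 0 := by
  have hsplit := card_filter_add_card_filter_not (s := s) (fun j => a j < 0)
  rcases le_or_gt ((s.card + 1) / 2) (s.filter (a · < 0)).card with hneg | hpos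
  · obtain ⟨N, hNs, hN⟩ := exists_subset_card_eq hneg
    refine ⟨1, by simp, N, hNs.trans (filter_subset _ _), hN, fun j hj => ?_⟩
    simpa using (mem_filter.1 (hNs hj)).2
  · obtain ⟨N, hNs, hN⟩ :=
      exists_subset_card_eq (s := s.filter (¬ a · < 0)) (n := (s.card + 1) / 2) (by omega)
    refine ⟨-1, by simp, N, hNs.trans (filter_subset _ _), hN, fun j hj => ?_⟩
    obtain ⟨hjs, hj⟩ := mem_filter.1 (hNs hj)
    have := lt_of_le_of_ne (not_lt.1 hj) (ha j hjs).symm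
    linarith

section Charging

variable {ι E : Type*} [LinearOrder ι] [NormedAddCommGroup E] [InnerProductSpace ℝ E] {x : ι → E}

def emptySpheresThrough (x : ι → E) (G : Finset ι) : Set (E × ℝ) :=
  {g | (∀ j ∈ G, spherePower (x j) g = 0) ∧ ∀ j, ∀ u ∈ G, j < u → 0 ≤ spherePower (x j) g}

/-- On these spheres `Λ g - Λ f = ∑_{j ∈ N} aⱼ · power(xⱼ, g) ≤ 0`, with equality only if `g`
also passes through `N`, hence through all of `T`. -/
lemma isUniqueMaxOn_emptySpheresThrough {T N : Finset ι}
    (hT : affineSpan ℝ (x '' T) = ⊤) {a : ι → ℝ} {Λ : Dual ℝ (E × ℝ)}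
    (ha : Λ = ∑ j ∈ T, a j • (spherePower (x j)).linear) (hN : N ⊆ T)
    (hNneg : ∀ j ∈ N, a j < 0) (hNlt : ∀ j ∈ N, ∃ u ∈ T \ N, j < u) {f : E × ℝ}
    (hfT : ∀ j ∈ T, spherePower (x j) f = 0) (hf : f ∈ emptySpheresThrough x (T \ N)) :
    IsUniqueMaxOn Λ (emptySpheresThrough x (T \ N)) f := by
  refine ⟨hf, fun g ⟨hgG, hgpos⟩ hgf => ?_⟩
  have hsplit : Λ g - Λ f = ∑ j ∈ N, a j * spherePower (x j) g := by
    rw [sub_eq_sum_mul_spherePower ha hfT, ← sum_sdiff hN,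
      sum_eq_zero fun j hj => by rw [hgG j hj, mul_zero], zero_add]
  have hterm : ∀ j ∈ N, a j * spherePower (x j) g ≤ 0 := fun j hj =>
    let ⟨u, hu, hju⟩ := hNlt j hj
    mul_nonpos_of_nonpos_of_nonneg (hNneg j hj).le (hgpos j u hu hju)
  refine sub_neg.1 (hsplit ▸ (sum_nonpos hterm).lt_of_ne fun hzero => hgf ?_)
  have hgN := (sum_eq_zero_iff_of_nonpos hterm).1 hzero
  refine eq_of_spherePower_eq_zero hT ?_ (by rintro _ ⟨j, hj, rfl⟩; exact hfT j hj)
  rintro _ ⟨j, hj, rfl⟩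
  by_cases hjN : j ∈ N
  · exact (mul_eq_zero.1 (hgN j hjN)).resolve_left (hNneg j hjN).ne
  · exact hgG j (mem_sdiff.2 ⟨hj, hjN⟩)

/-- `G` is `T` minus half of its non-maximal points, chosen where the coefficients of `Λ` share a
sign. -/
theorem exists_isUniqueMaxOn {T : Finset ι}
    (hT : affineSpan ℝ (x '' T) = ⊤) (hcard : T.card = finrank ℝ E + 1) {Λ : Dual ℝ (E × ℝ)}
    (hΛ : IsGeneric x Λ) {f : E × ℝ} (hfT : ∀ j ∈ T, spherePower (x j) f = 0)
    (hf : ∀ j, ∀ u ∈ T, j < u → 0 ≤ spherePower (x j) f) :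
    ∃ G : Finset ι, G.card = (finrank ℝ E + 2) / 2 ∧
      ∃ ε ∈ ({1, -1} : Finset ℝ), IsUniqueMaxOn (ε • Λ) (emptySpheresThrough x G) f := by
  have hTne : T.Nonempty := card_pos.1 (by omega)
  set μ := T.max' hTne
  obtain ⟨a, ha⟩ := exists_eq_sum_smul_linear hT Λ
  obtain ⟨ε, hε, N, hN, hNcard, hNneg⟩ := exists_sign_subset_card_eq_half (T.erase μ) a
    fun j hj => hΛ.coeff_ne_zero hcard ha (mem_of_mem_erase hj)
  have hNT : N ⊆ T := hN.trans (erase_subset _ _)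
  have hμ : μ ∈ T \ N := mem_sdiff.2 ⟨max'_mem _ _, fun h => (mem_erase.1 (hN h)).1 rfl⟩
  refine ⟨T \ N, ?_, ε, hε, isUniqueMaxOn_emptySpheresThrough hT (a := fun j => ε * a j) ?_ hNT
    hNneg ?_ hfT ⟨fun j hj => hfT j (mem_sdiff.1 hj).1, fun j u hu => hf j u (mem_sdiff.1 hu).1⟩⟩
  · rw [card_sdiff_of_subset hNT, hNcard, card_erase_of_mem (max'_mem _ _), hcard]
    omega
  · rw [ha, smul_sum]
    simp only [smul_smul]
  · intro j hj
    obtain ⟨hjμ, hjT⟩ := mem_erase.1 (hN hj)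
    exact ⟨μ, hμ, lt_of_le_of_ne (le_max' _ _ hjT) hjμ⟩

end Charging

section Insertion

variable {ι E : Type*} [LinearOrder ι] [NormedAddCommGroup E] [InnerProductSpace ℝ E] {x : ι → E}

def IsInsertionSphere (x : ι → E) (m : ι) (f : E × ℝ) : Prop :=
  (∀ j < m, 0 ≤ spherePower (x j) f) ∧ spherePower (x m) f ≤ 0

lemma IsInsertionSphere.eq_of_mem_iff {m m' : ι} {f : E × ℝ} {T : Finset ι}
    (h : IsInsertionSphere x m f) (h' : IsInsertionSphere x m' f)
    (hT : ∀ j, spherePower (x j) f = 0 → j ∈ T) (hTm : ∀ j ∈ T, j ≤ m) (hTm' : ∀ j ∈ T, j ≤ m')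
    (hmm' : m ∈ T ↔ m' ∈ T) : m = m' := by
  by_cases hm : m ∈ T
  · exact le_antisymm (hTm' m hm) (hTm m' (hmm'.1 hm))
  have hneg : spherePower (x m) f < 0 := h.2.lt_of_ne fun h0 => hm (hT m h0)
  have hneg' : spherePower (x m') f < 0 := h'.2.lt_of_ne fun h0 => hm (hmm'.2 (hT m' h0))
  rcases lt_trichotomy m m' with hlt | heq | hgt
  · exact absurd (h'.1 m hlt) hneg.not_ge
  · exact heq
  · exact absurd (h.1 m' hgt) hneg'.not_ge

noncomputable def insertionConstraint (x : ι → E) (m j : ι) : E × ℝ →ᵃ[ℝ] ℝ :=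
  if j = m then -spherePower (x j) else spherePower (x j)

lemma insertionConstraint_eq_zero_iff {m j : ι} {f : E × ℝ} :
    insertionConstraint x m j f = 0 ↔ spherePower (x j) f = 0 := by
  unfold insertionConstraint
  split_ifs <;> simp

lemma isInsertionSphere_iff [LocallyFiniteOrderBot ι] {m : ι} {f : E × ℝ} :
    IsInsertionSphere x m f ↔ ∀ j ∈ Iic m, 0 ≤ insertionConstraint x m j f := by
  simp only [IsInsertionSphere, mem_Iic, insertionConstraint]
  refine ⟨fun ⟨hlt, hm⟩ j hj => ?_, fun h => ⟨fun j hj => ?_, ?_⟩⟩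
  · split_ifs with hjm
    · simpa [hjm] using hm
    · exact hlt j (lt_of_le_of_ne hj hjm)
  · simpa [hj.ne] using h j hj.le
  · simpa using h m le_rfl

/-- `U = T ∪ {m}` is recovered from the key: `f` from `(G, ε)`, `T` as the zero set of `f`, and
`m` as `max T` if `b`, else as the first point strictly inside `f`. -/
def Certifies (x : ι → E) (Λ : Dual ℝ (E × ℝ)) (G : Finset ι) (ε : ℝ) (b : Bool)
    (U : Finset ι) : Prop :=
  ∃ m f T, IsInsertionSphere x m f ∧ T.card = finrank ℝ E + 1 ∧
    (∀ j, spherePower (x j) f = 0 ↔ j ∈ T) ∧ (∀ j ∈ T, j ≤ m) ∧ (m ∈ T ↔ b = true) ∧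
    IsUniqueMaxOn (ε • Λ) (emptySpheresThrough x G) f ∧ U = insert m T

variable {Λ : Dual ℝ (E × ℝ)} {G U U' : Finset ι} {ε : ℝ} {b : Bool}

lemma Certifies.eq (h : Certifies x Λ G ε b U) (h' : Certifies x Λ G ε b U') : U = U' := by
  obtain ⟨m, f, T, hf, -, hT, hTm, hb, hmax, rfl⟩ := h
  obtain ⟨m', f', T', hf', -, hT', hTm', hb', hmax', rfl⟩ := h'
  obtain rfl := hmax.eq hmax'
  obtain rfl : T = T' := by
    ext j
    rw [← hT, hT']
  rw [hf.eq_of_mem_iff hf' (fun j => (hT j).1) hTm hTm' (hb.trans hb'.symm)]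

lemma Certifies.card_le (h : Certifies x Λ G ε b U) : U.card ≤ finrank ℝ E + 2 := by
  obtain ⟨m, f, T, -, hTcard, -, -, -, -, rfl⟩ := h
  exact (card_insert_le m T).trans (by omega)

end Insertion

theorem card_le_card_mul_two_pow_of_forall_subset {α κ : Type*} {𝒮 : Finset (Finset α)}
    {K : Finset κ} {D : ℕ} (R : κ → Finset α → Prop) (hR : ∀ k U U', R k U → R k U' → U = U')
    (hD : ∀ k U, R k U → U.card ≤ D) (h𝒮 : ∀ σ ∈ 𝒮, ∃ k ∈ K, ∃ U, R k U ∧ σ ⊆ U) :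
    𝒮.card ≤ K.card * 2 ^ D := by
  classical
  calc 𝒮.card ≤ (K.biUnion fun k => 𝒮.filter fun σ => ∃ U, R k U ∧ σ ⊆ U).card :=
        card_le_card fun σ hσ =>
          let ⟨k, hk, U, hU, hσU⟩ := h𝒮 σ hσ
          mem_biUnion.2 ⟨k, hk, mem_filter.2 ⟨hσ, U, hU, hσU⟩⟩
    _ ≤ K.card * 2 ^ D := card_biUnion_le_card_mul _ _ _ fun k _ => ?_
  by_cases h : ∃ U, R k U
  · obtain ⟨U, hU⟩ := h
    calc _ ≤ U.powerset.card := card_le_card fun σ hσ => by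
            obtain ⟨-, U', hU', hσU'⟩ := mem_filter.1 hσ
            exact mem_powerset.2 (hR k U' U hU' hU ▸ hσU')
      _ ≤ 2 ^ D := (card_powerset U).trans_le (Nat.pow_le_pow_right two_pos (hD k U hU))
  · simp [not_exists.1 h]

lemma card_filter_forall_val_lt_le (n k : ℕ) :
    (univ.filter fun σ : Finset (Fin n) => ∀ i ∈ σ, (i : ℕ) < k).card ≤ 2 ^ k := by
  set S₀ := univ.filter fun i : Fin n => (i : ℕ) < k
  have hS₀ : S₀.card ≤ k := by
    simpa using card_le_card_of_injOn Fin.val (t := range k)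
      (fun i hi => mem_range.2 (mem_filter.1 hi).2) Fin.val_injective.injOn
  calc _ ≤ S₀.powerset.card := card_le_card fun σ hσ => by
          rw [mem_filter] at hσ
          exact mem_powerset.2 fun i hi => mem_filter.2 ⟨mem_univ i, hσ.2 i hi⟩
    _ ≤ 2 ^ k := (card_powerset S₀).trans_le (Nat.pow_le_pow_right two_pos hS₀)

section GeneralPosition

variable {d n : ℕ} {x : Fin n → EuclideanSpace ℝ (Fin d)}

lemma _root_.GenPos.affineSpan_eq_top (hx : GenPos x) {T : Finset (Fin n)} (hT : d + 1 ≤ T.card) :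
    affineSpan ℝ (x '' T) = ⊤ := by
  obtain ⟨S, hST, hS⟩ := exists_subset_card_eq hT
  have hind := (hx S (card_pos.1 (by omega)) hS.le).1
  have hspan := hind.affineSpan_eq_top_iff_card_eq_finrank_add_one.2 (by simp [hS])
  rw [show Set.range (fun i : S => x i) = x '' S by ext; simp] at hspan
  exact top_unique (hspan ▸ affineSpan_mono ℝ (Set.image_mono hST))

lemma _root_.GenPos.card_le_of_spherePower_eq_zero (hx : GenPos x) {s : Finset (Fin n)}
    {f : EuclideanSpace ℝ (Fin d) × ℝ} (hf : ∀ j ∈ s, spherePower (x j) f = 0) :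
    s.card ≤ d + 1 := by
  by_contra! hlt
  obtain ⟨S, hSs, hS⟩ := exists_subset_card_eq (show d + 2 ≤ s.card by omega)
  obtain ⟨i, hi⟩ : S.Nonempty := card_pos.1 (by omega)
  have hcard : (S.erase i).card = d + 1 := by rw [card_erase_of_mem hi, hS]; rfl
  obtain ⟨j₀, hj₀⟩ : (S.erase i).Nonempty := card_pos.1 (by omega)
  have hdist : ∀ j ∈ S, dist (x j) f.1 = √(‖f.1‖ ^ 2 - f.2) :=
    fun j hj => dist_eq_sqrt_of_spherePower_eq_zero (hf j (hSs hj))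
  -- the sphere through `S.erase i` is unique, so it is in particular the smallest one
  refine (hx (S.erase i) ⟨j₀, hj₀⟩ hcard.le).2 f.1 _
    ⟨fun j hj => hdist j (mem_of_mem_erase hj), fun c r h => ?_⟩ i (notMem_erase i S) (hdist i hi)
  have hfc : f = (c, ‖c‖ ^ 2 - r ^ 2) :=
    eq_of_spherePower_eq_zero (hx.affineSpan_eq_top hcard.ge)
      (by rintro _ ⟨j, hj, rfl⟩; exact hf j (hSs (mem_of_mem_erase hj)))
      (by rintro _ ⟨j, hj, rfl⟩; rw [spherePower_sphere, h j hj, sub_self])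
  rw [← hdist j₀ (mem_of_mem_erase hj₀), ← h j₀ hj₀, hfc]

lemma _root_.IncrMem.exists_isInsertionSphere {σ : Finset (Fin n)} (hσ : IncrMem x σ) :
    ∃ (h : σ.Nonempty) (f : EuclideanSpace ℝ (Fin d) × ℝ), IsInsertionSphere x (σ.max' h) f ∧
      ∀ j ∈ σ.erase (σ.max' h), spherePower (x j) f = 0 := by
  obtain ⟨h, c, r, hon, hin, hout⟩ := hσ
  have hr : 0 ≤ r := dist_nonneg.trans hin
  refine ⟨h, (c, ‖c‖ ^ 2 - r ^ 2), ⟨fun j hj => ?_, ?_⟩, fun j hj => ?_⟩ <;>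
    rw [spherePower_sphere]
  · exact sub_nonneg.2 (pow_le_pow_left₀ hr (hout j hj) 2)
  · exact sub_nonpos.2 (pow_le_pow_left₀ dist_nonneg hin 2)
  · rw [hon j hj, sub_self]

theorem _root_.GenPos.exists_isInsertionSphere_card_eq (hx : GenPos x) {m : Fin n}
    (hm : d + 1 ≤ (m : ℕ)) {f₀ : EuclideanSpace ℝ (Fin d) × ℝ} (hf₀ : IsInsertionSphere x m f₀) :
    ∃ f, ∃ T : Finset (Fin n), IsInsertionSphere x m f ∧ T.card = d + 1 ∧
      (∀ j, spherePower (x j) f = 0 ↔ j ∈ T) ∧ (∀ j ∈ T, j ≤ m) ∧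
      ∀ j ≤ m, spherePower (x j) f₀ = 0 → j ∈ T := by
  have hpointed (g) (hg : ∀ j ∈ Iic m, (insertionConstraint x m j).linear g = 0) : g = 0 := by
    refine eq_zero_of_spherePower_linear_eq_zero
      (hx.affineSpan_eq_top (T := Iio m) (by rwa [Fin.card_Iio])) ?_
    rintro _ ⟨j, hj, rfl⟩
    have hjm := mem_Iio.1 hj
    simpa [insertionConstraint, hjm.ne] using hg j (mem_Iic.2 hjm.le)
  have hzero {f j} (hj : j ∈ tightSet (Iic m) (insertionConstraint x m) f) :
      spherePower (x j) f = 0 :=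
    insertionConstraint_eq_zero_iff.1 (mem_filter.1 hj).2
  have hbound f : (tightSet (Iic m) (insertionConstraint x m) f).card ≤
      finrank ℝ (EuclideanSpace ℝ (Fin d) × ℝ) := by
    rw [finrank_prod, finrank_euclideanSpace_fin, finrank_self]
    exact hx.card_le_of_spherePower_eq_zero fun j => hzero
  obtain ⟨f, hf, hsub, hcard⟩ :=
    exists_tightSet_card_eq_finrank hpointed hbound (isInsertionSphere_iff.1 hf₀)
  rw [finrank_prod, finrank_euclideanSpace_fin, finrank_self] at hcard
  set T := tightSet (Iic m) (insertionConstraint x m) f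
  refine ⟨f, T, isInsertionSphere_iff.2 hf, hcard, fun j => ⟨fun hj => ?_, hzero⟩,
    fun j hj => mem_Iic.1 (mem_filter.1 hj).1, fun j hjm hj => hsub ?_⟩
  · by_contra hjT
    have := hx.card_le_of_spherePower_eq_zero (s := insert j T) (by
      simp only [mem_insert, forall_eq_or_imp]
      exact ⟨hj, fun i => hzero⟩)
    rw [card_insert_of_notMem hjT] at this
    omega
  · exact mem_filter.2 ⟨mem_Iic.2 hjm, insertionConstraint_eq_zero_iff.2 hj⟩

noncomputable def chargeKeys (n e : ℕ) : Finset (Finset (Fin n) × ℝ × Bool) :=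
  univ.powersetCard e ×ˢ (({1, -1} : Finset ℝ) ×ˢ univ)

lemma card_chargeKeys (n e : ℕ) : (chargeKeys n e).card = n.choose e * 4 := by
  simp [chargeKeys, card_product, card_pair (show (1 : ℝ) ≠ -1 by norm_num)]

theorem exists_certifies (hx : GenPos x) {Λ : Dual ℝ (EuclideanSpace ℝ (Fin d) × ℝ)}
    (hΛ : IsGeneric x Λ) {σ : Finset (Fin n)} (hσ : IncrMem x σ)
    (hbig : ∃ i ∈ σ, d + 1 ≤ (i : ℕ)) :
    ∃ k ∈ chargeKeys n ((d + 2) / 2), ∃ U, Certifies x Λ k.1 k.2.1 k.2.2 U ∧ σ ⊆ U := by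
  obtain ⟨hne, f₀, hf₀, hσf₀⟩ := hσ.exists_isInsertionSphere
  set m := σ.max' hne
  have hm : d + 1 ≤ (m : ℕ) := let ⟨i, hi, hdi⟩ := hbig; hdi.trans (le_max' σ i hi)
  obtain ⟨f, T, hf, hTcard, hT, hTm, hσT⟩ := hx.exists_isInsertionSphere_card_eq hm hf₀
  have hfin : finrank ℝ (EuclideanSpace ℝ (Fin d)) = d := finrank_euclideanSpace_fin
  obtain ⟨G, hG, ε, hε, hmax⟩ := exists_isUniqueMaxOn (hx.affineSpan_eq_top hTcard.ge)
    (by rw [hfin, hTcard]) hΛ (fun j => (hT j).2) fun j u hu hju => hf.1 j (hju.trans_le (hTm u hu))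
  refine ⟨(G, ε, decide (m ∈ T)), mem_product.2 ⟨mem_powersetCard.2 ⟨subset_univ _, by
    rw [hG, hfin]⟩, mem_product.2 ⟨hε, mem_univ _⟩⟩, insert m T,
    ⟨m, f, T, hf, by rw [hfin, hTcard], hT, hTm, by simp, hmax, rfl⟩, fun i hi => ?_⟩
  rcases eq_or_ne i m with rfl | him
  · exact mem_insert_self _ _
  · exact mem_insert_of_mem (hσT i (le_max' σ i hi) (hσf₀ i (mem_erase.2 ⟨him, hi⟩)))

open Classical in
theorem _root_.GenPos.card_filter_incrMem_le (hx : GenPos x) :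
    ((univ.filter (IncrMem x)).filter fun σ : Finset (Fin n) => ∃ i ∈ σ, d + 1 ≤ (i : ℕ)).card ≤
      n.choose ((d + 2) / 2) * 4 * 2 ^ (d + 2) := by
  obtain ⟨Λ, hΛ⟩ := exists_isGeneric x
  rw [← card_chargeKeys]
  refine card_le_card_mul_two_pow_of_forall_subset
    (fun (k : Finset (Fin n) × ℝ × Bool) U => Certifies x Λ k.1 k.2.1 k.2.2 U)
    (fun _ _ _ => Certifies.eq) (fun _ _ h => by simpa using h.card_le) fun σ hσ => ?_
  obtain ⟨hσ, hbig⟩ := mem_filter.1 hσ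
  exact exists_certifies hx hΛ (mem_filter.1 hσ).2 hbig

end GeneralPosition

end IncrementalDelaunay

open IncrementalDelaunay in
/-- `(d + 2) / 2` is `⌈(d + 1) / 2⌉` in natural-number division. -/
theorem incr_size_bound (d : ℕ) :
    ∃ C : ℕ, ∀ (n : ℕ) (x : Fin n → EuclideanSpace ℝ (Fin d)),
      Function.Injective x → GenPos x →
      {σ : Finset (Fin n) | IncrMem x σ}.ncard ≤ C * n ^ ((d + 2) / 2) := by
  classical
  refine ⟨2 ^ (d + 5), fun n x _ hx => ?_⟩
  rcases n.eq_zero_or_pos with rfl | hn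
  · suffices {σ : Finset (Fin 0) | IncrMem x σ} = ∅ by simp [this]
    exact Set.eq_empty_of_forall_notMem fun σ ⟨h, _⟩ => h.choose.elim0
  have hsmall : ((univ.filter (IncrMem x)).filter
      fun σ : Finset (Fin n) => ¬∃ i ∈ σ, d + 1 ≤ (i : ℕ)).card ≤ 2 ^ (d + 1) := by
    refine (card_le_card fun σ hσ => ?_).trans (card_filter_forall_val_lt_le n (d + 1))
    simp only [mem_filter, mem_univ, true_and, not_exists, not_and, not_le] at hσ ⊢
    exact hσ.2
  have hchoose := Nat.choose_le_pow n ((d + 2) / 2)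
  have hpow : 1 ≤ n ^ ((d + 2) / 2) := Nat.one_le_pow _ _ hn
  rw [Set.ncard_eq_toFinset_card', Set.toFinset_ofPred,
    ← card_filter_add_card_filter_not fun σ : Finset (Fin n) => ∃ i ∈ σ, d + 1 ≤ (i : ℕ)]
  calc _ ≤ n.choose ((d + 2) / 2) * 4 * 2 ^ (d + 2) + 2 ^ (d + 1) :=
        add_le_add hx.card_filter_incrMem_le hsmall
    _ ≤ 2 ^ (d + 5) * n ^ ((d + 2) / 2) := by
      rw [show 2 ^ (d + 5) = 2 ^ (d + 1) * 16 by ring, show 2 ^ (d + 2) = 2 ^ (d + 1) * 2 by ring]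
      nlinarith [Nat.one_le_two_pow (n := d + 1)]
end

section
/- The number of conflict pairs encountered by the Bowyer–Watson incremental insertion of n points in general position in ℝ^d (satisfying the Δ-property) is O(n^{⌈(d+1)/2⌉}). -/
open Finset

/-- The Δ-property: the convex hull of all points equals the simplex spanned by the first
`d+1` points. -/
def DeltaProp {d n : ℕ} (x : Fin n → EuclideanSpace ℝ (Fin d)) : Prop :=
  convexHull ℝ (Set.range x) = convexHull ℝ (x '' {i : Fin n | (i : ℕ) < d + 1})

/-- A conflict pair: a `d`-simplex `σ` of the Delaunay triangulation of the points preceding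
`j`, whose circumsphere strictly contains the point `x j`. -/
def ConflictPair {d n : ℕ} (x : Fin n → EuclideanSpace ℝ (Fin d))
    (p : Finset (Fin n) × Fin n) : Prop :=
  p.1.card = d + 1 ∧
  DelMem x (Finset.univ.filter fun i => i < p.2) p.1 ∧
  ∃ (c : EuclideanSpace ℝ (Fin d)) (r : ℝ),
    (∀ i ∈ p.1, dist (x i) c = r) ∧ dist (x p.2) c < r

/-!
A conflict pair `(σ, j)` is determined by `σ`: once `x j` lies inside the circumsphere of `σ`,
`σ` is no longer Delaunay. To count the simplices, fix a generic direction `w` and let `m` be the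
last vertex of `σ`. Writing `w = ∑ aᵢ (xᵢ - xₘ)`, either the vertices with `aᵢ > 0` or those with
`aᵢ < 0`, together with `m`, form a face `D` with at most `⌊d/2⌋ + 1` vertices, and `v = ±w` has
negative coefficients off `D`. The centre of the empty sphere of `σ` then minimises `⟪v, ·⟫`
among the points at least as close to `xₘ` as to the other vertices of `σ` and equally close to
the vertices of `D`. If `τ` carries the same label `(v, D)`, each centre lies in the region of the
other simplex, so the two centres coincide and general position forces `σ = τ`. Hence conflict
pairs inject into the `2 (n + 1)^(⌊d/2⌋ + 1)` labels.
-/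

open RealInnerProductSpace Submodule

section Counting

theorem Set.ncard_le_card_of_forall_exists_rel {α β : Type*} {s : Set α} {t : Finset β}
    (R : α → β → Prop) (hR : ∀ a ∈ s, ∃ b ∈ t, R a b)
    (hinj : ∀ a ∈ s, ∀ a' ∈ s, ∀ b, R a b → R a' b → a = a') : s.ncard ≤ t.card := by
  choose f hft hf using hR
  rw [← Nat.card_coe_set_eq, ← Nat.card_eq_finsetCard]
  refine Nat.card_le_card_of_injective (fun a : s => ⟨f a a.2, hft a a.2⟩) fun a a' h => ?_
  have hfa : f a a.2 = f a' a'.2 := congrArg Subtype.val h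
  exact Subtype.ext (hinj a a.2 a' a'.2 _ (hf a a.2) (hfa ▸ hf a' a'.2))

theorem card_filter_card_le_le_pow (α : Type*) [Fintype α] (K : ℕ) :
    #{D : Finset α | D.card ≤ K} ≤ (Fintype.card α + 1) ^ K := by
  classical
  have hinj : Set.InjOn (fun (D : Finset α) (i : Fin K) => D.toList[(i : ℕ)]?)
      ↑(univ.filter fun D : Finset α => D.card ≤ K) := by
    intro D hD D' hD' h
    rw [mem_coe, mem_filter] at hD hD'
    have hlen : ∀ E : Finset α, E.card ≤ K → ∀ k, K ≤ k → E.toList[k]? = none :=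
      fun E hE k hk => List.getElem?_eq_none (by rw [length_toList]; omega)
    rw [← D.toList_toFinset, ← D'.toList_toFinset]
    congr 1
    refine List.ext_getElem? fun k => ?_
    by_cases hk : k < K
    · exact congrFun h ⟨k, hk⟩
    · rw [hlen D hD.2 k (by omega), hlen D' hD'.2 k (by omega)]
  simpa [Fintype.card_fun, Fintype.card_option] using
    card_le_card_of_injOn _ (fun _ _ => mem_univ _) hinj

end Counting

section Faces

variable {ι E : Type*} [AddCommGroup E] [Module ℝ E]

def IsNegOffFace (x : ι → E) (σ : Finset ι) (m : ι) (D : Finset ι) (v : E) : Prop :=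
  ∃ a : ι → ℝ, v = ∑ i ∈ σ, a i • (x i - x m) ∧ ∀ i ∈ σ, i ∉ D → a i < 0

def IsFaceLabel [LinearOrder ι] (x : ι → E) (σ : Finset ι) (vD : E × Finset ι) : Prop :=
  vD.2 ⊆ σ ∧ ∃ m ∈ vD.2, (∀ i ∈ σ, i ≤ m) ∧ IsNegOffFace x σ m vD.2 vD.1

variable [DecidableEq ι] {σ : Finset ι} {m : ι} {a : ι → ℝ}

theorem isNegOffFace_filter_pos (x : ι → E) (ha : ∀ i ∈ σ, i ≠ m → a i ≠ 0) :
    IsNegOffFace x σ m {i ∈ σ | i = m ∨ 0 < a i} (∑ i ∈ σ, a i • (x i - x m)) := by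
  refine ⟨a, rfl, fun i hi hiD => ?_⟩
  simp only [mem_filter, not_and, not_or, not_lt] at hiD
  obtain ⟨him, hle⟩ := hiD hi
  exact lt_of_le_of_ne hle (ha i hi him)

theorem card_filter_pos_add_card_filter_neg (hm : m ∈ σ) (ha : ∀ i ∈ σ, i ≠ m → a i ≠ 0) :
    #{i ∈ σ | i = m ∨ 0 < a i} + #{i ∈ σ | i = m ∨ 0 < -a i} = #σ + 1 := by
  have hunion : {i ∈ σ | i = m ∨ 0 < a i} ∪ {i ∈ σ | i = m ∨ 0 < -a i} = σ := by
    rw [← filter_or]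
    refine filter_true_of_mem fun i hi => ?_
    by_cases him : i = m
    · exact Or.inl (Or.inl him)
    · rcases (ha i hi him).lt_or_gt with h | h
      · exact Or.inr (Or.inr (neg_pos.mpr h))
      · exact Or.inl (Or.inr h)
  have hinter : {i ∈ σ | i = m ∨ 0 < a i} ∩ {i ∈ σ | i = m ∨ 0 < -a i} = {m} := by
    ext i
    simp only [mem_inter, mem_filter, mem_singleton, neg_pos]
    constructor
    · rintro ⟨⟨-, him | hpos⟩, -, him' | hneg⟩
      all_goals first | assumption | exact absurd hpos hneg.not_gt
    · rintro rfl
      exact ⟨⟨hm, Or.inl rfl⟩, hm, Or.inl rfl⟩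
  rw [← card_union_add_card_inter, hunion, hinter, card_singleton]

end Faces

section InnerProductSpace

variable {E ι : Type*} [NormedAddCommGroup E] [InnerProductSpace ℝ E]

theorem dist_sq_sub_dist_sq_eq_two_mul_inner {a b c c' : E} (h : dist a c = dist b c) :
    dist a c' ^ 2 - dist b c' ^ 2 = 2 * ⟪b - a, c' - c⟫ := by
  have h2 : ‖a - c‖ ^ 2 = ‖b - c‖ ^ 2 := by rw [← dist_eq_norm, ← dist_eq_norm, h]
  rw [dist_eq_norm, dist_eq_norm, norm_sub_sq_real, norm_sub_sq_real]
  rw [norm_sub_sq_real, norm_sub_sq_real] at h2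
  simp only [inner_sub_left, inner_sub_right, real_inner_comm c a, real_inner_comm c b,
    real_inner_comm c' a, real_inner_comm c' b] at h2 ⊢
  linarith

theorem eq_of_forall_dist_eq_of_span_eq_top {x : ι → E} {σ : Finset ι} {m : ι}
    (hspan : span ℝ ((fun i => x i - x m) '' σ) = ⊤) {c₁ c₂ : E}
    (h₁ : ∀ i ∈ σ, dist (x i) c₁ = dist (x m) c₁)
    (h₂ : ∀ i ∈ σ, dist (x i) c₂ = dist (x m) c₂) : c₁ = c₂ := by
  obtain ⟨a, ha⟩ := (mem_span_image_finset_iff_exists_fun' ℝ).mp (hspan ▸ mem_top (x := c₂ - c₁))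
  have hperp : ∀ i ∈ σ, ⟪x i - x m, c₂ - c₁⟫ = 0 := fun i hi => by
    rw [real_inner_comm]
    exact EuclideanGeometry.inner_vsub_vsub_of_dist_eq_of_dist_eq
      (h₁ i hi).symm (h₂ i hi).symm
  have : ⟪c₂ - c₁, c₂ - c₁⟫ = 0 := by
    nth_rw 1 [← ha]
    simp only [sum_inner, real_inner_smul_left]
    exact sum_eq_zero fun i hi => by rw [hperp i hi, mul_zero]
  exact (sub_eq_zero.mp (inner_self_eq_zero.mp this)).symm

theorem IsNegOffFace.inner_sub_nonneg {x : ι → E} {σ D : Finset ι} {m : ι} {v c c' : E}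
    (hv : IsNegOffFace x σ m D v) (hc : ∀ i ∈ σ, dist (x i) c = dist (x m) c)
    (hc' : ∀ i ∈ σ, dist (x m) c' ≤ dist (x i) c')
    (hD : ∀ i ∈ D, dist (x i) c' = dist (x m) c') :
    0 ≤ ⟪v, c' - c⟫ ∧ (⟪v, c' - c⟫ = 0 → ∀ i ∈ σ, dist (x i) c' = dist (x m) c') := by
  obtain ⟨a, rfl, ha⟩ := hv
  have hsq : ∀ i ∈ σ, dist (x m) c' ^ 2 - dist (x i) c' ^ 2 = 2 * ⟪x i - x m, c' - c⟫ :=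
    fun i hi => dist_sq_sub_dist_sq_eq_two_mul_inner (hc i hi).symm
  have hface : ∀ i ∈ σ, i ∈ D → ⟪x i - x m, c' - c⟫ = 0 := fun i hi hiD => by
    have := hsq i hi
    rw [hD i hiD, sub_self] at this
    linarith
  have hterm : ∀ i ∈ σ, 0 ≤ a i * ⟪x i - x m, c' - c⟫ := fun i hi => by
    by_cases hiD : i ∈ D
    · rw [hface i hi hiD, mul_zero]
    · refine mul_nonneg_of_nonpos_of_nonpos (ha i hi hiD).le ?_
      nlinarith [hsq i hi, hc' i hi, dist_nonneg (x := x m) (y := c')]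
  simp only [sum_inner, real_inner_smul_left]
  refine ⟨sum_nonneg hterm, fun h0 i hi => ?_⟩
  have hzero : ⟪x i - x m, c' - c⟫ = 0 := by
    by_cases hiD : i ∈ D
    · exact hface i hi hiD
    · have := (sum_eq_zero_iff_of_nonneg hterm).mp h0 i hi
      exact (mul_eq_zero.mp this).resolve_left (ha i hi hiD).ne
  have := hsq i hi
  rw [hzero, mul_zero, sub_eq_zero] at this
  exact (pow_left_inj₀ dist_nonneg dist_nonneg two_ne_zero).mp this.symm

end InnerProductSpace

section GenericPosition

variable {d n : ℕ} {x : Fin n → EuclideanSpace ℝ (Fin d)}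

theorem GenPos.span_sub_eq_top (hx : GenPos x) {σ : Finset (Fin n)} (hσ : σ.card = d + 1)
    {m : Fin n} (hm : m ∈ σ) : span ℝ ((fun i => x i - x m) '' σ) = ⊤ := by
  have htop : affineSpan ℝ (Set.range fun i : σ => x i) = ⊤ :=
    (hx σ ⟨m, hm⟩ hσ.le).1.affineSpan_eq_top_iff_card_eq_finrank_add_one.mpr (by simp [hσ])
  have hrange : (Set.range fun i : σ => x i) = x '' σ := by ext; simp
  rw [hrange] at htop
  rw [← AffineSubspace.vectorSpan_eq_top_of_affineSpan_eq_top ℝ _ _ htop,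
    vectorSpan_eq_span_vsub_set_right ℝ (Set.mem_image_of_mem x hm), Set.image_image]
  rfl

theorem GenPos.center_unique (hx : GenPos x) {σ : Finset (Fin n)} (hσ : σ.card = d + 1)
    {c₁ c₂ : EuclideanSpace ℝ (Fin d)} {r₁ r₂ : ℝ} (h₁ : ∀ i ∈ σ, dist (x i) c₁ = r₁)
    (h₂ : ∀ i ∈ σ, dist (x i) c₂ = r₂) : c₁ = c₂ := by
  obtain ⟨m, hm⟩ : σ.Nonempty := card_pos.mp (by omega)
  exact eq_of_forall_dist_eq_of_span_eq_top (hx.span_sub_eq_top hσ hm)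
    (fun i hi => by rw [h₁ i hi, h₁ m hm]) (fun i hi => by rw [h₂ i hi, h₂ m hm])

theorem GenPos.mem_of_dist_eq (hx : GenPos x) {σ : Finset (Fin n)} (hσ : σ.card = d + 1)
    {c : EuclideanSpace ℝ (Fin d)} {r : ℝ} (hc : ∀ i ∈ σ, dist (x i) c = r) {k : Fin n}
    (hk : dist (x k) c = r) : k ∈ σ := by
  obtain ⟨m, hm⟩ : σ.Nonempty := card_pos.mp (by omega)
  by_contra hkσ
  refine (hx σ ⟨m, hm⟩ hσ.le).2 c r ⟨hc, fun c' r' hc' => ?_⟩ k hkσ hk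
  rw [← hc m hm, ← hc' m hm, hx.center_unique hσ hc hc']

/-- Chosen so that every coefficient of `w` in the edge basis of a simplex of `d + 1` points in
general position is nonzero. -/
def IsGenericDir (x : Fin n → EuclideanSpace ℝ (Fin d)) (w : EuclideanSpace ℝ (Fin d)) :
    Prop :=
  ∀ (s : Finset (Fin n)) (m : Fin n), s.card < d → w ∉ span ℝ ((fun i => x i - x m) '' s)

theorem exists_isGenericDir (x : Fin n → EuclideanSpace ℝ (Fin d)) :
    ∃ w, IsGenericDir x w := by
  classical
  obtain ⟨w, hw⟩ := exists_forall_notMem_of_forall_ne_top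
    (fun sm : {sm : Finset (Fin n) × Fin n // sm.1.card < d} =>
      span ℝ ((fun i => x i - x sm.1.2) '' sm.1.1)) fun sm htop => by
    have hle := finrank_span_finset_le_card (R := ℝ) (sm.1.1.image fun i => x i - x sm.1.2)
    rw [coe_image, Set.finrank, htop, finrank_top, finrank_euclideanSpace_fin] at hle
    exact absurd (hle.trans card_image_le) (not_le.mpr sm.2)
  exact ⟨w, fun s m hs => hw ⟨(s, m), hs⟩⟩

theorem IsGenericDir.coeff_ne_zero {w : EuclideanSpace ℝ (Fin d)} (hw : IsGenericDir x w)
    {σ : Finset (Fin n)} (hσ : σ.card = d + 1) {m : Fin n} (hm : m ∈ σ) {a : Fin n → ℝ}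
    (ha : w = ∑ i ∈ σ, a i • (x i - x m)) {k : Fin n} (hk : k ∈ σ) (hkm : k ≠ m) :
    a k ≠ 0 := by
  intro hak
  replace hm : m ∈ σ.erase k := mem_erase.mpr ⟨hkm.symm, hm⟩
  refine hw ((σ.erase k).erase m) m ?_ ((mem_span_image_finset_iff_exists_fun' ℝ).mpr ⟨a, ?_⟩)
  · have hpos := card_pos.mpr ⟨m, hm⟩
    rw [card_erase_of_mem hk, hσ] at hpos
    rw [card_erase_of_mem hm, card_erase_of_mem hk, hσ]
    omega
  · rw [sum_erase _ (by rw [sub_self, smul_zero]), sum_erase _ (by rw [hak, zero_smul]), ha]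

theorem IsGenericDir.exists_isFaceLabel {w : EuclideanSpace ℝ (Fin d)} (hw : IsGenericDir x w)
    (hx : GenPos x) {σ : Finset (Fin n)} (hσ : σ.card = d + 1) :
    ∃ v D, (v = w ∨ v = -w) ∧ D.card ≤ (d + 2) / 2 ∧ IsFaceLabel x σ (v, D) := by
  have hne : σ.Nonempty := card_pos.mp (by omega)
  set m := σ.max' hne
  have hm : m ∈ σ := σ.max'_mem hne
  obtain ⟨a, ha⟩ := (mem_span_image_finset_iff_exists_fun' ℝ).mp
    (hx.span_sub_eq_top hσ hm ▸ mem_top (x := w))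
  have ha0 : ∀ i ∈ σ, i ≠ m → a i ≠ 0 := fun i hi him => hw.coeff_ne_zero hσ hm ha.symm hi him
  have hcard := card_filter_pos_add_card_filter_neg hm ha0
  have hmax : ∀ i ∈ σ, i ≤ m := fun i hi => σ.le_max' i hi
  by_cases hpos : #{i ∈ σ | i = m ∨ 0 < a i} ≤ (d + 2) / 2
  · exact ⟨w, {i ∈ σ | i = m ∨ 0 < a i}, Or.inl rfl, hpos, filter_subset _ _, m, mem_filter.mpr ⟨hm, Or.inl rfl⟩, hmax,
      ha ▸ isNegOffFace_filter_pos x ha0⟩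
  · have hneg : -w = ∑ i ∈ σ, -a i • (x i - x m) := by
      simp only [← ha, neg_smul, sum_neg_distrib]
    exact ⟨-w, {i ∈ σ | i = m ∨ 0 < -a i}, Or.inr rfl, by omega, filter_subset _ _, m, mem_filter.mpr ⟨hm, Or.inl rfl⟩,
      hmax, hneg ▸ isNegOffFace_filter_pos x fun i hi him => neg_ne_zero.mpr (ha0 i hi him)⟩

theorem GenPos.not_delMem_of_conflictPair (hx : GenPos x) {σ : Finset (Fin n)} {j l : Fin n}
    (hj : ConflictPair x (σ, j)) (hjl : j < l) : ¬ DelMem x (univ.filter (· < l)) σ := by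
  rintro ⟨-, -, c, r, hc, hempty⟩
  obtain ⟨hσ, -, c₀, r₀, hc₀, hin⟩ := hj
  obtain rfl := hx.center_unique hσ hc₀ hc
  obtain ⟨m, hm⟩ : σ.Nonempty := card_pos.mp (by simp only at hσ; omega)
  have := hempty j (mem_filter.mpr ⟨mem_univ _, hjl⟩)
  rw [← hc m hm, hc₀ m hm] at this
  exact this.not_gt hin

theorem GenPos.eq_of_conflictPair (hx : GenPos x) {σ : Finset (Fin n)} {j l : Fin n}
    (hj : ConflictPair x (σ, j)) (hl : ConflictPair x (σ, l)) : j = l := by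
  rcases lt_trichotomy j l with hjl | rfl | hlj
  · exact absurd hl.2.1 (hx.not_delMem_of_conflictPair hj hjl)
  · rfl
  · exact absurd hj.2.1 (hx.not_delMem_of_conflictPair hl hlj)

theorem GenPos.eq_of_isNegOffFace (hx : GenPos x) {σ τ D Y Y' : Finset (Fin n)} {m : Fin n}
    {v : EuclideanSpace ℝ (Fin d)} (hσ : σ.card = d + 1) (hτ : τ.card = d + 1)
    (hσY : DelMem x Y σ) (hτY' : DelMem x Y' τ) (hσY' : σ ⊆ Y') (hτY : τ ⊆ Y)
    (hDσ : D ⊆ σ) (hDτ : D ⊆ τ) (hm : m ∈ D)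
    (hvσ : IsNegOffFace x σ m D v) (hvτ : IsNegOffFace x τ m D v) : σ = τ := by
  obtain ⟨-, -, c, r, hc, hcY⟩ := hσY
  obtain ⟨-, -, c', r', hc', hc'Y'⟩ := hτY'
  have hmσ := hDσ hm
  have hmτ := hDτ hm
  have hσside := hvσ.inner_sub_nonneg (c := c) (c' := c')
    (fun i hi => by rw [hc i hi, hc m hmσ])
    (fun i hi => by rw [hc' m hmτ]; exact hc'Y' i (hσY' hi))
    (fun i hi => by rw [hc' i (hDτ hi), hc' m hmτ])
  have hτside := hvτ.inner_sub_nonneg (c := c') (c' := c)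
    (fun i hi => by rw [hc' i hi, hc' m hmτ])
    (fun i hi => by rw [hc m hmσ]; exact hcY i (hτY hi))
    (fun i hi => by rw [hc i (hDσ hi), hc m hmσ])
  have h0 : ⟪v, c' - c⟫ = 0 := by
    have : ⟪v, c - c'⟫ = -⟪v, c' - c⟫ := by rw [← inner_neg_right, neg_sub]
    linarith [hσside.1, hτside.1]
  obtain rfl : c' = c := hx.center_unique hσ (hσside.2 h0) hc
  have hτσ : τ ⊆ σ := fun i hi =>
    hx.mem_of_dist_eq hσ hc (by rw [hc' i hi, ← hc' m hmτ, hc m hmσ])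
  exact (eq_of_subset_of_card_le hτσ (by omega)).symm

theorem GenPos.eq_of_isFaceLabel (hx : GenPos x) {p q : Finset (Fin n) × Fin n}
    {vD : EuclideanSpace ℝ (Fin d) × Finset (Fin n)} (hp : ConflictPair x p)
    (hq : ConflictPair x q) (hlp : IsFaceLabel x p.1 vD) (hlq : IsFaceLabel x q.1 vD) :
    p = q := by
  obtain ⟨σ, j⟩ := p
  obtain ⟨τ, l⟩ := q
  obtain ⟨hDσ, m, hm, hσm, hvσ⟩ := hlp
  obtain ⟨hDτ, m', hm', hτm', hvτ⟩ := hlq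
  obtain rfl : m = m' := le_antisymm (hτm' m (hDτ hm)) (hσm m' (hDσ hm'))
  have hml : m < l := by simpa using hq.2.1.2.1 (hDτ hm)
  have hmj : m < j := by simpa using hp.2.1.2.1 (hDσ hm)
  obtain rfl : σ = τ := hx.eq_of_isNegOffFace hp.1 hq.1 hp.2.1 hq.2.1
    (fun i hi => by simpa using (hσm i hi).trans_lt hml)
    (fun i hi => by simpa using (hτm' i hi).trans_lt hmj) hDσ hDτ hm hvσ hvτ
  rw [hx.eq_of_conflictPair hp hq]

end GenericPosition

-- `⌈(d + 1) / 2⌉` is written `(d + 2) / 2` in natural-number division.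
/-- For fixed `d`, the number of conflict pairs encountered by the Bowyer–Watson incremental
insertion of `n` points in general position satisfying the Δ-property is
`O(n^⌈(d+1)/2⌉)`.  (Note `⌈(d+1)/2⌉ = (d+2)/2` with natural division.) -/
theorem conflict_pairs_bound (d : ℕ) :
    ∃ C : ℕ, ∀ (n : ℕ) (x : Fin n → EuclideanSpace ℝ (Fin d)),
      Function.Injective x → GenPos x → DeltaProp x →
      {p : Finset (Fin n) × Fin n | ConflictPair x p}.ncard ≤ C * n ^ ((d + 2) / 2) := by
  classical
  refine ⟨2 * 2 ^ ((d + 2) / 2), fun n x _ hx _ => ?_⟩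
  obtain ⟨w, hw⟩ := exists_isGenericDir x
  rcases n.eq_zero_or_pos with rfl | hn
  · simp [Set.eq_empty_of_isEmpty]
  let labels := ({w, -w} : Finset _) ×ˢ univ.filter fun D : Finset (Fin n) => D.card ≤ (d + 2) / 2
  calc _ ≤ labels.card := by
        refine Set.ncard_le_card_of_forall_exists_rel (fun p vD => IsFaceLabel x p.1 vD)
          (fun p hp => ?_) fun p hp q hq vD hlp hlq => hx.eq_of_isFaceLabel hp hq hlp hlq
        obtain ⟨v, D, hv, hD, hlabel⟩ := hw.exists_isFaceLabel hx hp.1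
        exact ⟨(v, D), mem_product.mpr ⟨by rcases hv with rfl | rfl <;> simp,
          mem_filter.mpr ⟨mem_univ _, hD⟩⟩, hlabel⟩
    _ ≤ 2 * (n + 1) ^ ((d + 2) / 2) := by
        rw [card_product]
        gcongr
        · exact card_le_two
        · simpa using card_filter_card_le_le_pow (Fin n) ((d + 2) / 2)
    _ ≤ 2 * (2 * n) ^ ((d + 2) / 2) := by gcongr; omega
    _ = 2 * 2 ^ ((d + 2) / 2) * n ^ ((d + 2) / 2) := by rw [mul_pow, mul_assoc]
end

section
/- A nonempty σ ⊂ X with max(σ) = x_k lies in the sublevel Delaunay bifiltration Del_{r,s}(γ) if and only if γ(x_k) ≤ s and σ ∈ SelDel_r(X_k, X_{k−1}); in particular, for σ ∈ I(X), the incremental Delaunay radius ρ_σ equals the selective Delaunay radius ρ_{σ, X_{k−1}}. -/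
/-!
Every point of `σ` other than `max σ` precedes `max σ`, so a sphere with `σ` on or inside and
all points before `max σ` on or outside passes through `σ \ {max σ}`. Hence the spheres
witnessing the incremental Delaunay condition are exactly those witnessing the selective one
for `E = X_{k-1}`, the two radius sets coincide, and so do their infima.
-/

open Finset

/-- The set of radii of spheres witnessing the incremental Delaunay condition for `σ`:
circumspheres of `σ \ {max σ}` with `max σ` on or inside and all earlier points on or
outside.  Its infimum is the incremental Delaunay radius `ρ_σ`. -/
def incrSet {d n : ℕ} (x : Fin n → EuclideanSpace ℝ (Fin d))
    (σ : Finset (Fin n)) : Set ℝ :=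
  {r | ∃ h : σ.Nonempty, ∃ c : EuclideanSpace ℝ (Fin d),
    (∀ i ∈ σ.erase (σ.max' h), dist (x i) c = r) ∧
    dist (x (σ.max' h)) c ≤ r ∧
    ∀ i : Fin n, i < σ.max' h → r ≤ dist (x i) c}

/-- The set of radii of spheres with all of `σ` on or inside and all of `E` on or outside;
its infimum is the selective Delaunay radius `ρ_{σ,E}`. -/
def selSet {d n : ℕ} (x : Fin n → EuclideanSpace ℝ (Fin d))
    (E σ : Finset (Fin n)) : Set ℝ :=
  {r | ∃ c : EuclideanSpace ℝ (Fin d),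
    (∀ i ∈ σ, dist (x i) c ≤ r) ∧ ∀ i ∈ E, r ≤ dist (x i) c}

/-- `σ ∈ SelDel_r(Y, E)`: `σ` is a nonempty subset of `Y` belonging to `SelDel(Y, E)`,
with selective Delaunay radius at most `r`. -/
def SelDelMem {d n : ℕ} (x : Fin n → EuclideanSpace ℝ (Fin d))
    (Y E : Finset (Fin n)) (r : ℝ) (σ : Finset (Fin n)) : Prop :=
  σ.Nonempty ∧ σ ⊆ Y ∧ (selSet x E σ).Nonempty ∧ sInf (selSet x E σ) ≤ r

/-- `σ ∈ Del_{r,s}(γ)`: `σ` is a simplex of the incremental Delaunay complex with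
incremental Delaunay radius `ρ_σ ≤ r` and `γ(max σ) ≤ s`. -/
def DelBiMem {d n : ℕ} (x : Fin n → EuclideanSpace ℝ (Fin d)) (γ : Fin n → ℝ)
    (r s : ℝ) (σ : Finset (Fin n)) : Prop :=
  (incrSet x σ).Nonempty ∧ sInf (incrSet x σ) ≤ r ∧
    ∃ h : σ.Nonempty, γ (σ.max' h) ≤ s

theorem incrSet_eq_selSet {d n : ℕ} (x : Fin n → EuclideanSpace ℝ (Fin d))
    {σ : Finset (Fin n)} (hσ : σ.Nonempty) :
    incrSet x σ = selSet x (univ.filter fun i => i < σ.max' hσ) σ := by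
  ext ρ
  constructor
  · rintro ⟨_, c, h_on, h_max, h_out⟩
    refine ⟨c, fun i hi => ?_, fun i hi => h_out i (mem_filter.mp hi).2⟩
    rcases eq_or_ne i (σ.max' hσ) with rfl | hne
    · exact h_max
    · exact (h_on i (mem_erase.mpr ⟨hne, hi⟩)).le
  · rintro ⟨c, h_in, h_out⟩
    refine ⟨hσ, c, fun i hi => ?_, h_in _ (σ.max'_mem hσ), fun i hi => h_out i (by simpa)⟩
    obtain ⟨hne, hiσ⟩ := mem_erase.mp hi
    have h_lt : i < σ.max' hσ := (σ.le_max' i hiσ).lt_of_ne hne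
    exact (h_in i hiσ).antisymm (h_out i (by simpa))

theorem subset_filter_le_max' {α : Type*} [LinearOrder α] [Fintype α] {σ : Finset α} (hσ : σ.Nonempty) :
    σ ⊆ univ.filter fun i => i ≤ σ.max' hσ :=
  fun i hi => mem_filter.mpr ⟨mem_univ i, σ.le_max' i hi⟩

theorem delBi_iff_selDel_general {d n : ℕ} (x : Fin n → EuclideanSpace ℝ (Fin d))
    (γ : Fin n → ℝ) (r s : ℝ)
    (σ : Finset (Fin n)) (hσ : σ.Nonempty) :
    (DelBiMem x γ r s σ ↔
      (γ (σ.max' hσ) ≤ s ∧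
        SelDelMem x (Finset.univ.filter fun i => i ≤ σ.max' hσ)
          (Finset.univ.filter fun i => i < σ.max' hσ) r σ)) ∧
    ((incrSet x σ).Nonempty →
      sInf (incrSet x σ) =
        sInf (selSet x (Finset.univ.filter fun i => i < σ.max' hσ) σ)) := by
  rw [DelBiMem, SelDelMem, incrSet_eq_selSet x hσ]
  refine ⟨⟨?_, ?_⟩, fun _ => rfl⟩
  · rintro ⟨h_ne, h_inf, _, h_γ⟩
    exact ⟨h_γ, hσ, subset_filter_le_max' hσ, h_ne, h_inf⟩
  · rintro ⟨h_γ, -, -, h_ne, h_inf⟩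
    exact ⟨h_ne, h_inf, hσ, h_γ⟩

/-- A nonempty `σ` with `max σ = x_k` lies in `Del_{r,s}(γ)` iff `γ(x_k) ≤ s` and
`σ ∈ SelDel_r(X_k, X_{k-1})`; moreover for `σ ∈ I(X)` the incremental Delaunay radius
equals the selective Delaunay radius `ρ_{σ, X_{k-1}}`. -/
theorem delBi_iff_selDel {d n : ℕ} (x : Fin n → EuclideanSpace ℝ (Fin d))
    (hinj : Function.Injective x) (hgp : GenPos x)
    (γ : Fin n → ℝ) (hγ : Monotone γ) (r s : ℝ) (hr : 0 ≤ r)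
    (σ : Finset (Fin n)) (hσ : σ.Nonempty) :
    (DelBiMem x γ r s σ ↔
      (γ (σ.max' hσ) ≤ s ∧
        SelDelMem x (Finset.univ.filter fun i => i ≤ σ.max' hσ)
          (Finset.univ.filter fun i => i < σ.max' hσ) r σ)) ∧
    ((incrSet x σ).Nonempty →
      sInf (incrSet x σ) =
        sInf (selSet x (Finset.univ.filter fun i => i < σ.max' hσ) σ)) :=
  delBi_iff_selDel_general x γ r s σ hσ
end

section
/- For any r ≥ 0, s ∈ ℝ, and function γ: X → ℝ on a finite X ⊂ ℝ^d in general position, one has the inclusions Del_{r,s}(γ) ⊂ DelČech_{r,s}(γ) ⊂ Čech_{r,s}(γ). -/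
open Finset

/-- Radii of balls enclosing `σ`; the infimum is the minimum enclosing ball radius `r_σ`. -/
def mebSet {d n : ℕ} (x : Fin n → EuclideanSpace ℝ (Fin d))
    (σ : Finset (Fin n)) : Set ℝ :=
  {r | ∃ c : EuclideanSpace ℝ (Fin d), ∀ i ∈ σ, dist (x i) c ≤ r}

/-- `σ ∈ DelČech_{r,s}(γ)`: `σ ∈ I(X)`, `r_σ ≤ r` and `γ(max σ) ≤ s`. -/
def DelCechBiMem {d n : ℕ} (x : Fin n → EuclideanSpace ℝ (Fin d)) (γ : Fin n → ℝ)
    (r s : ℝ) (σ : Finset (Fin n)) : Prop :=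
  (incrSet x σ).Nonempty ∧ sInf (mebSet x σ) ≤ r ∧
    ∃ h : σ.Nonempty, γ (σ.max' h) ≤ s

/-- `σ ∈ Čech_{r,s}(γ)`: `σ` is a nonempty subset of the `s`-sublevel set of `γ` with
minimum enclosing ball radius at most `r`. -/
def CechBiMem {d n : ℕ} (x : Fin n → EuclideanSpace ℝ (Fin d)) (γ : Fin n → ℝ)
    (r s : ℝ) (σ : Finset (Fin n)) : Prop :=
  σ.Nonempty ∧ (∀ i ∈ σ, γ i ≤ s) ∧ sInf (mebSet x σ) ≤ r

section Bifiltrations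

variable {d n : ℕ} (x : Fin n → EuclideanSpace ℝ (Fin d))

theorem incrSet_subset_mebSet (σ : Finset (Fin n)) : incrSet x σ ⊆ mebSet x σ := by
  rintro ρ ⟨hσ, c, hsphere, hmax, -⟩
  refine ⟨c, fun i hi => ?_⟩
  by_cases hi' : i = σ.max' hσ
  · exact hi' ▸ hmax
  · exact (hsphere i (mem_erase.mpr ⟨hi', hi⟩)).le

theorem bddBelow_mebSet {σ : Finset (Fin n)} (hσ : σ.Nonempty) : BddBelow (mebSet x σ) := by
  obtain ⟨i, hi⟩ := hσ
  exact ⟨0, fun _ ⟨_, hc⟩ => dist_nonneg.trans (hc i hi)⟩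

theorem nonempty_of_incrSet_nonempty {σ : Finset (Fin n)} (h : (incrSet x σ).Nonempty) :
    σ.Nonempty :=
  h.elim fun _ ⟨hσ, _⟩ => hσ

theorem sInf_mebSet_le_sInf_incrSet {σ : Finset (Fin n)} (h : (incrSet x σ).Nonempty) :
    sInf (mebSet x σ) ≤ sInf (incrSet x σ) :=
  csInf_le_csInf (bddBelow_mebSet x (nonempty_of_incrSet_nonempty x h)) h
    (incrSet_subset_mebSet x σ)

variable {x} {γ : Fin n → ℝ} {r s : ℝ} {σ : Finset (Fin n)}

theorem DelBiMem.delCechBiMem (h : DelBiMem x γ r s σ) : DelCechBiMem x γ r s σ :=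
  ⟨h.1, (sInf_mebSet_le_sInf_incrSet x h.1).trans h.2.1, h.2.2⟩

theorem DelCechBiMem.cechBiMem (hγ : Monotone γ) (h : DelCechBiMem x γ r s σ) :
    CechBiMem x γ r s σ := by
  obtain ⟨-, hmeb, hσ, hγmax⟩ := h
  exact ⟨hσ, fun i hi => (hγ (σ.le_max' i hi)).trans hγmax, hmeb⟩

end Bifiltrations

theorem delBi_subset_delCechBi_subset_cechBi_general {d n : ℕ}
    (x : Fin n → EuclideanSpace ℝ (Fin d))
    (γ : Fin n → ℝ) (hγ : Monotone γ) (r s : ℝ) :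
    (∀ σ, DelBiMem x γ r s σ → DelCechBiMem x γ r s σ) ∧
    (∀ σ, DelCechBiMem x γ r s σ → CechBiMem x γ r s σ) :=
  ⟨fun _ => DelBiMem.delCechBiMem, fun _ => DelCechBiMem.cechBiMem hγ⟩

/-- The inclusions `Del_{r,s}(γ) ⊆ DelČech_{r,s}(γ) ⊆ Čech_{r,s}(γ)`. -/
theorem delBi_subset_delCechBi_subset_cechBi {d n : ℕ}
    (x : Fin n → EuclideanSpace ℝ (Fin d))
    (hinj : Function.Injective x) (hgp : GenPos x)
    (γ : Fin n → ℝ) (hγ : Monotone γ) (r s : ℝ) (hr : 0 ≤ r) :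
    (∀ σ, DelBiMem x γ r s σ → DelCechBiMem x γ r s σ) ∧
    (∀ σ, DelCechBiMem x γ r s σ → CechBiMem x γ r s σ) :=
  delBi_subset_delCechBi_subset_cechBi_general x γ hγ r s
end
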